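/- Let g be a metric on a connected open set U ⊆ ℝⁿ (n ≥ 2) which is Einstein with constant non-zero scalar curvature, and let L be geodesically compatible with g and non-degenerate. If the metric gL⁻¹ is also Einstein with constant scalar curvature, then d tr(L) ≡ 0 on U. Equivalently, if d tr(L) does not vanish identically, then gL⁻¹ is not an Einstein metric of constant scalar curvature. -/

import Mathlib

open scoped BigOperators

/-- Partial derivative `∂_k f` at `x`. -/
noncomputable def pd {n : ℕ} (f : (Fin n → ℝ) → ℝ) (k : Fin n) (x : Fin n → ℝ) : ℝ :=
  fderiv ℝ f x (Pi.single k 1)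

/-- Christoffel symbols `Γ^i_{jk}` of a metric `g`. -/
noncomputable def Christoffel {n : ℕ} (g : (Fin n → ℝ) → Matrix (Fin n) (Fin n) ℝ)
    (i j k : Fin n) (x : Fin n → ℝ) : ℝ :=
  (1 / 2) * ∑ s, (g x)⁻¹ i s *
    (pd (fun y => g y s k) j x + pd (fun y => g y s j) k x - pd (fun y => g y j k) s x)

/-- Curvature tensor `R^l_{ijk}` of a metric `g`. -/
noncomputable def Curv {n : ℕ} (g : (Fin n → ℝ) → Matrix (Fin n) (Fin n) ℝ)
    (l i j k : Fin n) (x : Fin n → ℝ) : ℝ :=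
  pd (Christoffel g l i k) j x - pd (Christoffel g l i j) k x
    + ∑ s, (Christoffel g l j s x * Christoffel g s i k x
        - Christoffel g l k s x * Christoffel g s i j x)

/-- `g` is a (smooth pseudo-Riemannian) metric on `U`. -/
def IsMetricOn {n : ℕ} (g : (Fin n → ℝ) → Matrix (Fin n) (Fin n) ℝ)
    (U : Set (Fin n → ℝ)) : Prop :=
  (∀ i j, ContDiffOn ℝ (⊤ : ℕ∞) (fun x => g x i j) U) ∧
    (∀ x ∈ U, (g x).IsSymm) ∧ ∀ x ∈ U, (g x).det ≠ 0

/-- The metric `g` is flat on `U`. -/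
def IsFlatOn {n : ℕ} (g : (Fin n → ℝ) → Matrix (Fin n) (Fin n) ℝ)
    (U : Set (Fin n → ℝ)) : Prop :=
  ∀ x ∈ U, ∀ l i j k : Fin n, Curv g l i j k x = 0

/-- The metric `g` has constant curvature `K` on `U`:
`g^{js} R^i_{skm} = K (δ^i_k δ^j_m − δ^i_m δ^j_k)`. -/
def HasConstCurvOn {n : ℕ} (g : (Fin n → ℝ) → Matrix (Fin n) (Fin n) ℝ)
    (U : Set (Fin n → ℝ)) (K : ℝ) : Prop :=
  ∀ x ∈ U, ∀ i j k m : Fin n,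
    (∑ s, (g x)⁻¹ j s * Curv g i s k m x)
      = K * ((if i = k then (1:ℝ) else 0) * (if j = m then (1:ℝ) else 0)
          - (if i = m then (1:ℝ) else 0) * (if j = k then (1:ℝ) else 0))

/-- `λ = ½ tr L`. -/
noncomputable def lamL {n : ℕ} (L : (Fin n → ℝ) → Matrix (Fin n) (Fin n) ℝ)
    (x : Fin n → ℝ) : ℝ :=
  (1 / 2) * ∑ i, L x i i

/-- `L_{ij} = L^s_i g_{sj}`. -/
noncomputable def lowL {n : ℕ} (g L : (Fin n → ℝ) → Matrix (Fin n) (Fin n) ℝ)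
    (x : Fin n → ℝ) (i j : Fin n) : ℝ :=
  ∑ s, L x s i * g x s j

/-- `∇_k L_{ij} = ∂_k L_{ij} − Γ^s_{ki} L_{sj} − Γ^s_{kj} L_{is}`. -/
noncomputable def covL {n : ℕ} (g L : (Fin n → ℝ) → Matrix (Fin n) (Fin n) ℝ)
    (k i j : Fin n) (x : Fin n → ℝ) : ℝ :=
  pd (fun y => lowL g L y i j) k x
    - ∑ s, Christoffel g s k i x * lowL g L x s j
    - ∑ s, Christoffel g s k j x * lowL g L x i s

/-- `L` is geodesically compatible with `g` on `U`: it is smooth, `L_{ij}` is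
symmetric, and `∇_k L_{ij} = λ_i g_{jk} + λ_j g_{ik}` with `λ = ½ tr L`. -/
def GeodCompatOn {n : ℕ} (g L : (Fin n → ℝ) → Matrix (Fin n) (Fin n) ℝ)
    (U : Set (Fin n → ℝ)) : Prop :=
  (∀ i j, ContDiffOn ℝ (⊤ : ℕ∞) (fun x => L x i j) U) ∧
    (∀ x ∈ U, ∀ i j, lowL g L x i j = lowL g L x j i) ∧
    ∀ x ∈ U, ∀ k i j, covL g L k i j x
      = pd (lamL L) i x * g x j k + pd (lamL L) j x * g x i k

/-- `h` is a Casimir of the constant-curvature (curvature `K`) metric `g`: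
`g^{is} (∂_s ∂_j h − Γ^r_{sj} ∂_r h) + K h δ^i_j = 0`. -/
def IsCasimirOn {n : ℕ} (g : (Fin n → ℝ) → Matrix (Fin n) (Fin n) ℝ) (K : ℝ)
    (U : Set (Fin n → ℝ)) (h : (Fin n → ℝ) → ℝ) : Prop :=
  ContDiffOn ℝ (⊤ : ℕ∞) h U ∧
    ∀ x ∈ U, ∀ i j : Fin n,
      (∑ s, (g x)⁻¹ i s * (pd (pd h j) s x - ∑ r, Christoffel g r s j x * pd h r x))
        + K * h x * (if i = j then (1:ℝ) else 0) = 0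

/-- Ricci tensor `R_{ij} = R^s_{isj}` of a metric `g`. -/
noncomputable def RicciOf {n : ℕ} (g : (Fin n → ℝ) → Matrix (Fin n) (Fin n) ℝ)
    (i j : Fin n) (x : Fin n → ℝ) : ℝ :=
  ∑ s, Curv g s i s j x

section pdlemmas
variable {n : ℕ} {f g : (Fin n → ℝ) → ℝ} {x : Fin n → ℝ} {k : Fin n}

theorem pd_congr_nhds {h : (Fin n → ℝ) → ℝ} (hfh : f =ᶠ[nhds x] h) :
    pd f k x = pd h k x := by
  unfold pd; rw [Filter.EventuallyEq.fderiv_eq hfh]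

theorem pd_congr_open {U : Set (Fin n → ℝ)} (hU : IsOpen U) (hx : x ∈ U)
    {h : (Fin n → ℝ) → ℝ} (hfh : ∀ y ∈ U, f y = h y) : pd f k x = pd h k x :=
  pd_congr_nhds (Filter.eventuallyEq_of_mem (hU.mem_nhds hx) hfh)

theorem pd_const (c : ℝ) : pd (fun _ => c) k x = 0 := by
  unfold pd; rw [fderiv_fun_const]; simp

theorem pd_add (hf : DifferentiableAt ℝ f x) (hg : DifferentiableAt ℝ g x) :
    pd (fun y => f y + g y) k x = pd f k x + pd g k x := by
  unfold pd; rw [fderiv_fun_add hf hg]; simp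

theorem pd_sub (hf : DifferentiableAt ℝ f x) (hg : DifferentiableAt ℝ g x) :
    pd (fun y => f y - g y) k x = pd f k x - pd g k x := by
  unfold pd; rw [fderiv_fun_sub hf hg]; simp

theorem pd_neg : pd (fun y => -f y) k x = - pd f k x := by
  unfold pd; rw [fderiv_fun_neg]; simp

theorem pd_mul (hf : DifferentiableAt ℝ f x) (hg : DifferentiableAt ℝ g x) :
    pd (fun y => f y * g y) k x = pd f k x * g x + f x * pd g k x := by
  unfold pd; rw [fderiv_fun_mul hf hg]; simp; ring

theorem pd_cmul (c : ℝ) (hf : DifferentiableAt ℝ f x) :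
    pd (fun y => c * f y) k x = c * pd f k x := by
  unfold pd; rw [fderiv_const_mul hf]; simp

theorem pd_sum {ι : Type*} (s : Finset ι) (F : ι → (Fin n → ℝ) → ℝ)
    (hF : ∀ i ∈ s, DifferentiableAt ℝ (F i) x) :
    pd (fun y => ∑ i ∈ s, F i y) k x = ∑ i ∈ s, pd (F i) k x := by
  unfold pd; rw [fderiv_fun_sum hF]; simp

end pdlemmas

section smooth
variable {n : ℕ} {U : Set (Fin n → ℝ)} {f g : (Fin n → ℝ) → ℝ}
  {x : Fin n → ℝ} {k : Fin n}

theorem SmoothAux.differentiableAt (hU : IsOpen U) (hf : ContDiffOn ℝ (⊤ : ℕ∞) f U) (hx : x ∈ U) :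
    DifferentiableAt ℝ f x :=
  ((hf.contDiffAt (hU.mem_nhds hx)).differentiableAt (by simp))

theorem SmoothAux.pdSmooth (hU : IsOpen U) (hf : ContDiffOn ℝ (⊤ : ℕ∞) f U) : ContDiffOn ℝ (⊤ : ℕ∞) (pd f k) U := by
  have h1 : ContDiffOn ℝ (⊤ : ℕ∞) (fderiv ℝ f) U := hf.fderiv_of_isOpen hU (by simp)
  have : ContDiffOn ℝ (⊤ : ℕ∞) (fun y => (fderiv ℝ f y) (Pi.single k 1)) U :=
    h1.clm_apply contDiffOn_const
  exact this

theorem SmoothAux.comm (hU : IsOpen U) (hf : ContDiffOn ℝ (⊤ : ℕ∞) f U) (hx : x ∈ U) (i j : Fin n) :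
    pd (pd f i) j x = pd (pd f j) i x := by
  have hd : ∀ᶠ y in nhds x, HasFDerivAt f (fderiv ℝ f y) y := by
    filter_upwards [hU.mem_nhds hx] with y hy
    exact (SmoothAux.differentiableAt hU hf hy).hasFDerivAt
  have h1 : ContDiffOn ℝ (⊤ : ℕ∞) (fderiv ℝ f) U := hf.fderiv_of_isOpen hU (by simp)
  have hd2 : DifferentiableAt ℝ (fderiv ℝ f) x :=
    ((h1.contDiffAt (hU.mem_nhds hx)).differentiableAt (by simp))
  have hsymm := second_derivative_symmetric_of_eventually hd hd2.hasFDerivAt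
    (Pi.single j 1) (Pi.single i 1)
  have e : ∀ (v : Fin n → ℝ) (m : Fin n),
      pd (fun y => (fderiv ℝ f y) v) m x = (fderiv ℝ (fderiv ℝ f) x) (Pi.single m 1) v := by
    intro v m
    unfold pd
    rw [fderiv_clm_apply hd2 (differentiableAt_const v)]
    simp
  unfold pd
  have e1 : (fun y => fderiv ℝ f y (Pi.single i 1)) = fun y => (fderiv ℝ f y) (Pi.single i 1) := rfl
  rw [show (fderiv ℝ (fun y => fderiv ℝ f y (Pi.single i 1)) x) (Pi.single j 1)
      = (fderiv ℝ (fderiv ℝ f) x) (Pi.single j 1) (Pi.single i 1) by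
    have := e (Pi.single i 1) j; unfold pd at this; exact this,
    show (fderiv ℝ (fun y => fderiv ℝ f y (Pi.single j 1)) x) (Pi.single i 1)
      = (fderiv ℝ (fderiv ℝ f) x) (Pi.single i 1) (Pi.single j 1) by
    have := e (Pi.single j 1) i; unfold pd at this; exact this]
  exact hsymm

theorem SmoothAux.finset_prod {ι : Type*} (s : Finset ι) (F : ι → (Fin n → ℝ) → ℝ)
    (hF : ∀ i ∈ s, ContDiffOn ℝ (⊤ : ℕ∞) (F i) U) :
    ContDiffOn ℝ (⊤ : ℕ∞) (fun y => ∏ i ∈ s, F i y) U := by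
  classical
  induction s using Finset.induction_on with
  | empty => simpa using contDiffOn_const
  | insert _ _ hnotmem ih =>
    rename_i a s
    simp only [Finset.prod_insert hnotmem]
    exact (hF a (Finset.mem_insert_self a s)).mul
      (ih (fun i hi => hF i (Finset.mem_insert_of_mem hi)))

theorem SmoothAux.finset_sum {ι : Type*} (s : Finset ι) (F : ι → (Fin n → ℝ) → ℝ)
    (hF : ∀ i ∈ s, ContDiffOn ℝ (⊤ : ℕ∞) (F i) U) :
    ContDiffOn ℝ (⊤ : ℕ∞) (fun y => ∑ i ∈ s, F i y) U := by
  classical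
  induction s using Finset.induction_on with
  | empty => simpa using contDiffOn_const
  | insert _ _ hnotmem ih =>
    rename_i a s
    simp only [Finset.sum_insert hnotmem]
    exact (hF a (Finset.mem_insert_self a s)).add
      (ih (fun i hi => hF i (Finset.mem_insert_of_mem hi)))

theorem SmoothAux.det {M : (Fin n → ℝ) → Matrix (Fin n) (Fin n) ℝ}
    (hM : ∀ i j, ContDiffOn ℝ (⊤ : ℕ∞) (fun y => M y i j) U) :
    ContDiffOn ℝ (⊤ : ℕ∞) (fun y => (M y).det) U := by
  have : (fun y => (M y).det)
      = fun y => ∑ σ : Equiv.Perm (Fin n), ((Equiv.Perm.sign σ : ℤ) : ℝ) * ∏ i, M y (σ i) i := by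
    funext y
    rw [Matrix.det_apply]
    refine Finset.sum_congr rfl (fun σ _ => ?_)
    rw [Units.smul_def, zsmul_eq_mul]
  rw [this]
  apply SmoothAux.finset_sum
  intro σ _
  exact contDiffOn_const.mul (SmoothAux.finset_prod _ _ (fun i _ => hM (σ i) i))

theorem SmoothAux.inv_entry {M : (Fin n → ℝ) → Matrix (Fin n) (Fin n) ℝ}
    (hM : ∀ i j, ContDiffOn ℝ (⊤ : ℕ∞) (fun y => M y i j) U)
    (hdet : ∀ y ∈ U, (M y).det ≠ 0) (i j : Fin n) :
    ContDiffOn ℝ (⊤ : ℕ∞) (fun y => (M y)⁻¹ i j) U := by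
  have h1 : ∀ y, (M y)⁻¹ i j = Ring.inverse (M y).det * (M y).adjugate i j := by
    intro y; rw [Matrix.inv_def]; simp [Matrix.smul_apply]
  have h2 : ∀ y ∈ U, (M y)⁻¹ i j = ((M y).det)⁻¹ * (M y).adjugate i j := by
    intro y hy; rw [h1 y, Ring.inverse_eq_inv']
  have hadj : ContDiffOn ℝ (⊤ : ℕ∞) (fun y => (M y).adjugate i j) U := by
    have : (fun y => (M y).adjugate i j)
        = fun y => ((M y).updateRow j (Pi.single i 1)).det := by
      funext y; rw [Matrix.adjugate_apply]
    rw [this]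
    apply SmoothAux.det
    intro a b
    rcases eq_or_ne a j with rfl | hne
    · simp only [Matrix.updateRow_self]
      exact contDiffOn_const
    · simp only [Matrix.updateRow_ne hne]
      exact hM a b
  have hdet' : ContDiffOn ℝ (⊤ : ℕ∞) (fun y => ((M y).det)⁻¹) U :=
    (SmoothAux.det hM).inv hdet
  exact ContDiffOn.congr (hdet'.mul hadj) h2

end smooth
section Main
open Finset Matrix

variable {n : ℕ}

/-- `ḡ = g L⁻¹`. -/
noncomputable def gb (g L : (Fin n → ℝ) → Matrix (Fin n) (Fin n) ℝ) :
    (Fin n → ℝ) → Matrix (Fin n) (Fin n) ℝ := fun y => g y * (L y)⁻¹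

/-- `λ^l`, the gradient of `λ` with raised index. -/
noncomputable def Vu (g L : (Fin n → ℝ) → Matrix (Fin n) (Fin n) ℝ) (l : Fin n) :
    (Fin n → ℝ) → ℝ := fun y => ∑ s, (g y)⁻¹ l s * pd (lamL L) s y

/-- `Q^l_j = ∇_j λ^l`. -/
noncomputable def Qf (g L : (Fin n → ℝ) → Matrix (Fin n) (Fin n) ℝ) (l j : Fin n) :
    (Fin n → ℝ) → ℝ :=
  fun y => pd (Vu g L l) j y + ∑ s, Christoffel g l j s y * Vu g L s y

structure Setup (n : ℕ) (U : Set (Fin n → ℝ))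
    (g L : (Fin n → ℝ) → Matrix (Fin n) (Fin n) ℝ) : Prop where
  hUo : IsOpen U
  hg : IsMetricOn g U
  hgeo : GeodCompatOn g L U
  hnd : ∀ x ∈ U, (L x).det ≠ 0

variable {U : Set (Fin n → ℝ)} {g L : (Fin n → ℝ) → Matrix (Fin n) (Fin n) ℝ}
  {x : Fin n → ℝ}

namespace Setup

theorem sm_g (st : Setup n U g L) (i j : Fin n) : ContDiffOn ℝ (⊤ : ℕ∞) (fun y => g y i j) U :=
  st.hg.1 i j

theorem sm_L (st : Setup n U g L) (i j : Fin n) : ContDiffOn ℝ (⊤ : ℕ∞) (fun y => L y i j) U :=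
  st.hgeo.1 i j

theorem sm_gi (st : Setup n U g L) (i j : Fin n) :
    ContDiffOn ℝ (⊤ : ℕ∞) (fun y => (g y)⁻¹ i j) U :=
  SmoothAux.inv_entry st.sm_g st.hg.2.2 i j

theorem sm_Li (st : Setup n U g L) (i j : Fin n) :
    ContDiffOn ℝ (⊤ : ℕ∞) (fun y => (L y)⁻¹ i j) U :=
  SmoothAux.inv_entry st.sm_L st.hnd i j

theorem sm_gb (st : Setup n U g L) (i j : Fin n) :
    ContDiffOn ℝ (⊤ : ℕ∞) (fun y => gb g L y i j) U := by
  have : (fun y => gb g L y i j) = fun y => ∑ s, g y i s * (L y)⁻¹ s j := by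
    funext y; exact Matrix.mul_apply
  rw [this]
  exact SmoothAux.finset_sum _ _ (fun s _ => (st.sm_g i s).mul (st.sm_Li s j))

theorem det_gb (st : Setup n U g L) (hx : x ∈ U) : (gb g L x).det ≠ 0 := by
  unfold gb
  rw [Matrix.det_mul, Matrix.det_nonsing_inv, Ring.inverse_eq_inv']
  exact mul_ne_zero (st.hg.2.2 x hx) (inv_ne_zero (st.hnd x hx))

theorem sm_gbi (st : Setup n U g L) (i j : Fin n) :
    ContDiffOn ℝ (⊤ : ℕ∞) (fun y => (gb g L y)⁻¹ i j) U :=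
  SmoothAux.inv_entry st.sm_gb (fun y hy => st.det_gb hy) i j

theorem sm_chr (st : Setup n U g L) (i j k : Fin n) :
    ContDiffOn ℝ (⊤ : ℕ∞) (Christoffel g i j k) U := by
  unfold Christoffel
  apply ContDiffOn.mul contDiffOn_const
  apply SmoothAux.finset_sum
  intro s _
  exact (st.sm_gi i s).mul
    (((SmoothAux.pdSmooth st.hUo (st.sm_g s k)).add
        (SmoothAux.pdSmooth st.hUo (st.sm_g s j))).sub
      (SmoothAux.pdSmooth st.hUo (st.sm_g j k)))

theorem sm_chrb (st : Setup n U g L) (i j k : Fin n) :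
    ContDiffOn ℝ (⊤ : ℕ∞) (Christoffel (gb g L) i j k) U := by
  unfold Christoffel
  apply ContDiffOn.mul contDiffOn_const
  apply SmoothAux.finset_sum
  intro s _
  exact (st.sm_gbi i s).mul
    (((SmoothAux.pdSmooth st.hUo (st.sm_gb s k)).add
        (SmoothAux.pdSmooth st.hUo (st.sm_gb s j))).sub
      (SmoothAux.pdSmooth st.hUo (st.sm_gb j k)))

theorem sm_lam (st : Setup n U g L) : ContDiffOn ℝ (⊤ : ℕ∞) (lamL L) U := by
  unfold lamL
  exact ContDiffOn.mul contDiffOn_const (SmoothAux.finset_sum _ _ (fun i _ => st.sm_L i i))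

theorem sm_lami (st : Setup n U g L) (i : Fin n) : ContDiffOn ℝ (⊤ : ℕ∞) (pd (lamL L) i) U :=
  SmoothAux.pdSmooth st.hUo st.sm_lam

theorem sm_V (st : Setup n U g L) (l : Fin n) : ContDiffOn ℝ (⊤ : ℕ∞) (Vu g L l) U := by
  unfold Vu
  exact SmoothAux.finset_sum _ _ (fun s _ => (st.sm_gi l s).mul (st.sm_lami s))

theorem sm_Q (st : Setup n U g L) (l j : Fin n) : ContDiffOn ℝ (⊤ : ℕ∞) (Qf g L l j) U := by
  unfold Qf
  exact (SmoothAux.pdSmooth st.hUo (st.sm_V l)).add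
    (SmoothAux.finset_sum _ _ (fun s _ => (st.sm_chr l j s).mul (st.sm_V s)))

theorem dAt (st : Setup n U g L) {f : (Fin n → ℝ) → ℝ} (hf : ContDiffOn ℝ (⊤ : ℕ∞) f U)
    (hx : x ∈ U) : DifferentiableAt ℝ f x :=
  SmoothAux.differentiableAt st.hUo hf hx

/-! ### Pointwise algebraic identities -/

theorem gsym (st : Setup n U g L) (hx : x ∈ U) (i j : Fin n) : g x i j = g x j i :=
  (st.hg.2.1 x hx).apply j i

theorem gisym (st : Setup n U g L) (hx : x ∈ U) (i j : Fin n) :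
    (g x)⁻¹ i j = (g x)⁻¹ j i := by
  have h := st.hg.2.1 x hx
  have : ((g x)⁻¹).IsSymm := by
    unfold Matrix.IsSymm
    rw [Matrix.transpose_nonsing_inv, h]
  exact this.apply j i

theorem gimul (st : Setup n U g L) (hx : x ∈ U) (a b : Fin n) :
    ∑ s, (g x)⁻¹ a s * g x s b = if a = b then (1:ℝ) else 0 := by
  have h : (g x)⁻¹ * g x = 1 := Matrix.nonsing_inv_mul _ (Ne.isUnit (st.hg.2.2 x hx))
  have := congrFun (congrFun h a) b
  rw [Matrix.mul_apply] at this
  rw [this, Matrix.one_apply]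

theorem gmul (st : Setup n U g L) (hx : x ∈ U) (a b : Fin n) :
    ∑ s, g x a s * (g x)⁻¹ s b = if a = b then (1:ℝ) else 0 := by
  have h : g x * (g x)⁻¹ = 1 := Matrix.mul_nonsing_inv _ (Ne.isUnit (st.hg.2.2 x hx))
  have := congrFun (congrFun h a) b
  rw [Matrix.mul_apply] at this
  rw [this, Matrix.one_apply]

theorem Limul (st : Setup n U g L) (hx : x ∈ U) (a b : Fin n) :
    ∑ s, (L x)⁻¹ a s * L x s b = if a = b then (1:ℝ) else 0 := by
  have h : (L x)⁻¹ * L x = 1 := Matrix.nonsing_inv_mul _ (Ne.isUnit (st.hnd x hx))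
  have := congrFun (congrFun h a) b
  rw [Matrix.mul_apply] at this
  rw [this, Matrix.one_apply]

theorem Lmul (st : Setup n U g L) (hx : x ∈ U) (a b : Fin n) :
    ∑ s, L x a s * (L x)⁻¹ s b = if a = b then (1:ℝ) else 0 := by
  have h : L x * (L x)⁻¹ = 1 := Matrix.mul_nonsing_inv _ (Ne.isUnit (st.hnd x hx))
  have := congrFun (congrFun h a) b
  rw [Matrix.mul_apply] at this
  rw [this, Matrix.one_apply]

/-- `Lᵀ g = g L` (symmetry of the lowered `L`). -/
theorem LTg (st : Setup n U g L) (hx : x ∈ U) : (L x)ᵀ * g x = g x * L x := by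
  have hsym := st.hgeo.2.1 x hx
  ext i j
  have h1 : ((L x)ᵀ * g x) i j = lowL g L x i j := by
    rw [Matrix.mul_apply]; unfold lowL
    exact Finset.sum_congr rfl (fun s _ => by rw [Matrix.transpose_apply])
  have h2 : (g x * L x) i j = lowL g L x j i := by
    rw [Matrix.mul_apply]; unfold lowL
    refine Finset.sum_congr rfl (fun s _ => ?_)
    rw [st.gsym hx i s]; ring
  rw [h1, h2, hsym i j]

theorem gb_apply (i j : Fin n) : gb g L x i j = ∑ s, g x i s * (L x)⁻¹ s j :=
  Matrix.mul_apply

/-- symmetry of `ḡ`. -/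
theorem gbsym (st : Setup n U g L) (hx : x ∈ U) (i j : Fin n) :
    gb g L x i j = gb g L x j i := by
  have hL : IsUnit (L x).det := Ne.isUnit (st.hnd x hx)
  have hg' : IsUnit (g x).det := Ne.isUnit (st.hg.2.2 x hx)
  have key : (gb g L x)ᵀ = gb g L x := by
    unfold gb
    rw [Matrix.transpose_mul, Matrix.transpose_nonsing_inv, (st.hg.2.1 x hx)]
    -- ⊢ (L x)ᵀ⁻¹ * g x = g x * (L x)⁻¹
    have h := st.LTg hx
    have : g x = (L x)ᵀ * g x * (L x)⁻¹ := by
      rw [h, Matrix.mul_assoc, Matrix.mul_nonsing_inv _ hL, Matrix.mul_one]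
    calc (L x)ᵀ⁻¹ * g x = (L x)ᵀ⁻¹ * ((L x)ᵀ * g x * (L x)⁻¹) := by rw [← this]
      _ = ((L x)ᵀ⁻¹ * (L x)ᵀ) * (g x * (L x)⁻¹) := by
          rw [Matrix.mul_assoc, Matrix.mul_assoc]
      _ = g x * (L x)⁻¹ := by
          rw [Matrix.nonsing_inv_mul _ (by rwa [Matrix.det_transpose])]
          rw [Matrix.one_mul]
  have := congrFun (congrFun key j) i
  rw [Matrix.transpose_apply] at this
  exact this

theorem gbinv (st : Setup n U g L) (hx : x ∈ U) : (gb g L x)⁻¹ = L x * (g x)⁻¹ := by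
  unfold gb
  rw [Matrix.mul_inv_rev, Matrix.nonsing_inv_nonsing_inv _ (Ne.isUnit (st.hnd x hx))]

theorem gbimul (st : Setup n U g L) (hx : x ∈ U) (a b : Fin n) :
    ∑ s, (gb g L x)⁻¹ a s * gb g L x s b = if a = b then (1:ℝ) else 0 := by
  have h : (gb g L x)⁻¹ * gb g L x = 1 :=
    Matrix.nonsing_inv_mul _ (Ne.isUnit (st.det_gb hx))
  have := congrFun (congrFun h a) b
  rw [Matrix.mul_apply] at this
  rw [this, Matrix.one_apply]

/-- Basic contraction: `∑ₛ (∑ₘ g⁻¹ˢᵐ Eₘ) g_{sc} = E_c`. -/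
theorem contr1 (st : Setup n U g L) (hx : x ∈ U) (E : Fin n → ℝ) (c : Fin n) :
    ∑ s, (∑ m, (g x)⁻¹ s m * E m) * g x s c = E c := by
  have h1 : ∀ s : Fin n, (∑ m, (g x)⁻¹ s m * E m) * g x s c
      = ∑ m, E m * ((g x)⁻¹ m s * g x s c) := by
    intro s
    rw [Finset.sum_mul]
    refine Finset.sum_congr rfl (fun m _ => ?_)
    rw [st.gisym hx s m]; ring
  rw [Finset.sum_congr rfl (fun s _ => h1 s), Finset.sum_comm]
  have h2 : ∀ m : Fin n, ∑ s, E m * ((g x)⁻¹ m s * g x s c)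
      = E m * (if m = c then (1:ℝ) else 0) := by
    intro m
    rw [← Finset.mul_sum, st.gimul hx m c]
  rw [Finset.sum_congr rfl (fun m _ => h2 m)]
  simp

/-- Christoffel symmetric in its two last indices. -/
theorem chr_symm (st : Setup n U g L) (hx : x ∈ U) (i j k : Fin n) :
    Christoffel g i j k x = Christoffel g i k j x := by
  unfold Christoffel
  congr 1
  refine Finset.sum_congr rfl (fun s _ => ?_)
  have e : pd (fun y => g y j k) s x = pd (fun y => g y k j) s x :=
    pd_congr_open st.hUo hx (fun y hy => (st.hg.2.1 y hy).apply k j)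
  rw [e]; ring

/-- Lowered Christoffel contraction:
`∑ₛ Γ^s_{ab} g_{sc} = ½ (∂_a g_{cb} + ∂_b g_{ca} − ∂_c g_{ab})`. -/
theorem chr_low (st : Setup n U g L) (hx : x ∈ U) (a b c : Fin n) :
    ∑ s, Christoffel g s a b x * g x s c
      = (1/2) * (pd (fun y => g y c b) a x + pd (fun y => g y c a) b x
          - pd (fun y => g y a b) c x) := by
  have h : ∀ s : Fin n, Christoffel g s a b x
      = (1/2) * ∑ m, (g x)⁻¹ s m *
        (pd (fun y => g y m b) a x + pd (fun y => g y m a) b x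
          - pd (fun y => g y a b) m x) := fun s => rfl
  calc ∑ s, Christoffel g s a b x * g x s c
      = (1/2) * ∑ s, (∑ m, (g x)⁻¹ s m *
          (pd (fun y => g y m b) a x + pd (fun y => g y m a) b x
            - pd (fun y => g y a b) m x)) * g x s c := by
        rw [Finset.mul_sum]
        refine Finset.sum_congr rfl (fun s _ => ?_)
        rw [h s]; ring
    _ = _ := by rw [st.contr1 hx]

/-- Metric compatibility: `∂_k g_{ij} = ∑ₛ Γ^s_{ki} g_{sj} + ∑ₛ Γ^s_{kj} g_{is}`. -/
theorem nabla_g (st : Setup n U g L) (hx : x ∈ U) (i j k : Fin n) :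
    pd (fun y => g y i j) k x
      = (∑ s, Christoffel g s k i x * g x s j) + ∑ s, Christoffel g s k j x * g x i s := by
  have e2 : ∑ s, Christoffel g s k j x * g x i s
      = ∑ s, Christoffel g s k j x * g x s i :=
    Finset.sum_congr rfl (fun s _ => by rw [st.gsym hx i s])
  rw [e2, st.chr_low hx k i j, st.chr_low hx k j i]
  have sympd : ∀ a b c : Fin n, pd (fun y => g y a b) c x = pd (fun y => g y b a) c x := by
    intro a b c
    exact pd_congr_open st.hUo hx (fun y hy => (st.hg.2.1 y hy).apply b a)
  rw [sympd j i k, sympd j k i, sympd i k j]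
  ring

end Setup
end Main
section Main2
open Finset Matrix

variable {n : ℕ} {U : Set (Fin n → ℝ)} {g L : (Fin n → ℝ) → Matrix (Fin n) (Fin n) ℝ}
  {x : Fin n → ℝ}

namespace Setup

/-- Solve `∑ᵣ W r · L r j = R j` for `W`. -/
theorem solve_L (st : Setup n U g L) (hx : x ∈ U) (W R : Fin n → ℝ)
    (h : ∀ j, ∑ r, W r * L x r j = R j) (m : Fin n) :
    W m = ∑ j, R j * (L x)⁻¹ j m := by
  have : ∑ j, R j * (L x)⁻¹ j m = ∑ j, (∑ r, W r * L x r j) * (L x)⁻¹ j m :=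
    Finset.sum_congr rfl (fun j _ => by rw [h j])
  rw [this]
  have e : ∀ j, (∑ r, W r * L x r j) * (L x)⁻¹ j m
      = ∑ r, W r * (L x r j * (L x)⁻¹ j m) := by
    intro j; rw [Finset.sum_mul]; exact Finset.sum_congr rfl (fun r _ => by ring)
  rw [Finset.sum_congr rfl (fun j _ => e j), Finset.sum_comm]
  have e2 : ∀ r, ∑ j, W r * (L x r j * (L x)⁻¹ j m) = W r * (if r = m then (1:ℝ) else 0) := by
    intro r; rw [← Finset.mul_sum, st.Lmul hx r m]
  rw [Finset.sum_congr rfl (fun r _ => e2 r)]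
  simp

/-- Solve `∑ᵣ W r · g r j = R j` for `W`. -/
theorem solve_g (st : Setup n U g L) (hx : x ∈ U) (W R : Fin n → ℝ)
    (h : ∀ j, ∑ r, W r * g x r j = R j) (m : Fin n) :
    W m = ∑ j, (g x)⁻¹ m j * R j := by
  have : ∑ j, (g x)⁻¹ m j * R j = ∑ j, (g x)⁻¹ m j * ∑ r, W r * g x r j :=
    Finset.sum_congr rfl (fun j _ => by rw [h j])
  rw [this]
  have e : ∀ j, (g x)⁻¹ m j * ∑ r, W r * g x r j
      = ∑ r, W r * ((g x)⁻¹ m j * g x j r) := by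
    intro j
    rw [Finset.mul_sum]
    exact Finset.sum_congr rfl (fun r _ => by rw [st.gsym hx r j]; ring)
  rw [Finset.sum_congr rfl (fun j _ => e j), Finset.sum_comm]
  have e2 : ∀ r, ∑ j, W r * ((g x)⁻¹ m j * g x j r) = W r * (if m = r then (1:ℝ) else 0) := by
    intro r; rw [← Finset.mul_sum, st.gimul hx m r]
  rw [Finset.sum_congr rfl (fun r _ => e2 r)]
  simp

/-- `∑ₛ g_{js} V^s = λ_j`. -/
theorem lam_eq (st : Setup n U g L) (hx : x ∈ U) (j : Fin n) :
    ∑ s, g x j s * Vu g L s x = pd (lamL L) j x := by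
  unfold Vu
  have e : ∀ s, g x j s * (∑ r, (g x)⁻¹ s r * pd (lamL L) r x)
      = ∑ r, pd (lamL L) r x * (g x j s * (g x)⁻¹ s r) := by
    intro s; rw [Finset.mul_sum]; exact Finset.sum_congr rfl (fun r _ => by ring)
  rw [Finset.sum_congr rfl (fun s _ => e s), Finset.sum_comm]
  have e2 : ∀ r, ∑ s, pd (lamL L) r x * (g x j s * (g x)⁻¹ s r)
      = pd (lamL L) r x * (if j = r then (1:ℝ) else 0) := by
    intro r; rw [← Finset.mul_sum, st.gmul hx j r]
  rw [Finset.sum_congr rfl (fun r _ => e2 r)]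
  simp

/-- Raised-index geodesic compatibility: `∂_k L^l_i = λ_i δ^l_k + V^l g_{ik} − Γ^l_{ks}L^s_i + Γ^s_{ki}L^l_s`. -/
theorem nabla_L (st : Setup n U g L) (hx : x ∈ U) (l i k : Fin n) :
    pd (fun y => L y l i) k x
      = pd (lamL L) i x * (if l = k then (1:ℝ) else 0) + Vu g L l x * g x i k
        - (∑ s, Christoffel g l k s x * L x s i) + ∑ s, Christoffel g s k i x * L x l s := by
  have hd1 : ∀ a b : Fin n, DifferentiableAt ℝ (fun y => L y a b) x :=
    fun a b => st.dAt (st.sm_L a b) hx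
  have hd2 : ∀ a b : Fin n, DifferentiableAt ℝ (fun y => g y a b) x :=
    fun a b => st.dAt (st.sm_g a b) hx
  have key : ∀ j, ∑ r, (pd (fun y => L y r i) k x + (∑ s, Christoffel g r k s x * L x s i)
      - ∑ s, Christoffel g s k i x * L x r s) * g x r j
      = pd (lamL L) i x * g x j k + pd (lamL L) j x * g x i k := by
    intro j
    have hcov := st.hgeo.2.2 x hx k i j
    unfold covL at hcov
    have e1 : pd (fun y => lowL g L y i j) k x
        = ∑ s, (pd (fun y => L y s i) k x * g x s j + L x s i * pd (fun y => g y s j) k x) := by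
      have h0 : (fun y => lowL g L y i j) = fun y => ∑ s, L y s i * g y s j := rfl
      rw [h0, pd_sum _ _ (fun s _ => (hd1 s i).fun_mul (hd2 s j))]
      exact Finset.sum_congr rfl (fun s _ => pd_mul (hd1 s i) (hd2 s j))
    rw [e1] at hcov
    -- expand pd g via metric compatibility
    have eB : ∀ s : Fin n, pd (fun y => L y s i) k x * g x s j + L x s i * pd (fun y => g y s j) k x
        = pd (fun y => L y s i) k x * g x s j + ((∑ r, L x s i * (Christoffel g r k s x * g x r j))
            + ∑ r, L x s i * (Christoffel g r k j x * g x s r)) := by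
      intro s
      rw [st.nabla_g hx s j k, mul_add, Finset.mul_sum, Finset.mul_sum]
    have e2 : ∑ s, (pd (fun y => L y s i) k x * g x s j + L x s i * pd (fun y => g y s j) k x)
        = (∑ s, pd (fun y => L y s i) k x * g x s j)
          + ((∑ s, ∑ r, L x s i * (Christoffel g r k s x * g x r j))
            + ∑ s, ∑ r, L x s i * (Christoffel g r k j x * g x s r)) := by
      rw [Finset.sum_congr rfl (fun s _ => eB s), Finset.sum_add_distrib, Finset.sum_add_distrib]
    rw [e2] at hcov
    -- third double sum = ∑ₛ Γ^s_{kj} lowL_{is}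
    have e3 : ∑ s, ∑ r, L x s i * (Christoffel g r k j x * g x s r)
        = ∑ s, Christoffel g s k j x * lowL g L x i s := by
      rw [Finset.sum_comm]
      refine Finset.sum_congr rfl (fun r _ => ?_)
      unfold lowL
      rw [Finset.mul_sum]
      refine Finset.sum_congr rfl (fun s _ => ?_)
      ring
    rw [e3] at hcov
    -- second double sum reorganization
    have e4 : ∑ s, ∑ r, L x s i * (Christoffel g r k s x * g x r j)
        = ∑ r, (∑ s, Christoffel g r k s x * L x s i) * g x r j := by
      rw [Finset.sum_comm]
      refine Finset.sum_congr rfl (fun r _ => ?_)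
      rw [Finset.sum_mul]
      refine Finset.sum_congr rfl (fun s _ => ?_)
      ring
    rw [e4] at hcov
    -- ∑ₛ Γ^s_{ki} lowL_{sj} = ∑ᵣ (∑ₛ Γ^s_{ki} L^r_s) g_{rj}
    have e5 : ∑ s, Christoffel g s k i x * lowL g L x s j
        = ∑ r, (∑ s, Christoffel g s k i x * L x r s) * g x r j := by
      have : ∀ s, Christoffel g s k i x * lowL g L x s j
          = ∑ r, Christoffel g s k i x * L x r s * g x r j := by
        intro s; unfold lowL; rw [Finset.mul_sum]
        exact Finset.sum_congr rfl (fun r _ => by ring)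
      rw [Finset.sum_congr rfl (fun s _ => this s), Finset.sum_comm]
      exact Finset.sum_congr rfl (fun r _ => by rw [Finset.sum_mul])
    rw [e5] at hcov
    calc ∑ r, (pd (fun y => L y r i) k x + (∑ s, Christoffel g r k s x * L x s i)
          - ∑ s, Christoffel g s k i x * L x r s) * g x r j
        = ∑ r, (pd (fun y => L y r i) k x * g x r j
            + ((∑ s, Christoffel g r k s x * L x s i) * g x r j
              - (∑ s, Christoffel g s k i x * L x r s) * g x r j)) := by
          refine Finset.sum_congr rfl (fun r _ => ?_); ring
      _ = pd (lamL L) i x * g x j k + pd (lamL L) j x * g x i k := by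
          rw [Finset.sum_add_distrib, Finset.sum_sub_distrib]
          linarith [hcov]
  have hsolve := st.solve_g hx _ _ key l
  have expand : ∀ j : Fin n, (g x)⁻¹ l j * (pd (lamL L) i x * g x j k + pd (lamL L) j x * g x i k)
      = pd (lamL L) i x * ((g x)⁻¹ l j * g x j k) + ((g x)⁻¹ l j * pd (lamL L) j x) * g x i k := by
    intro j; ring
  rw [Finset.sum_congr rfl (fun j _ => expand j), Finset.sum_add_distrib] at hsolve
  have c1 : ∑ j, pd (lamL L) i x * ((g x)⁻¹ l j * g x j k)
      = pd (lamL L) i x * (if l = k then (1:ℝ) else 0) := by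
    rw [← Finset.mul_sum, st.gimul hx l k]
  have c2 : ∑ j, ((g x)⁻¹ l j * pd (lamL L) j x) * g x i k = Vu g L l x * g x i k := by
    rw [← Finset.sum_mul]; rfl
  rw [c1, c2] at hsolve
  linarith [hsolve]
end Setup
end Main2
section Main3
open Finset Matrix

variable {n : ℕ} {U : Set (Fin n → ℝ)} {g L : (Fin n → ℝ) → Matrix (Fin n) (Fin n) ℝ}
  {x : Fin n → ℝ}

namespace Setup

/-- `ḡ L = g` entrywise, on `U`. -/
theorem gbL (st : Setup n U g L) (hx : x ∈ U) (i j : Fin n) :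
    ∑ s, gb g L x i s * L x s j = g x i j := by
  have h : gb g L x * L x = g x := by
    unfold gb
    rw [Matrix.mul_assoc, Matrix.nonsing_inv_mul _ (Ne.isUnit (st.hnd x hx)), Matrix.mul_one]
  have := congrFun (congrFun h i) j
  rw [Matrix.mul_apply] at this
  exact this

/-- `∑ⱼ λ_j (L⁻¹)^j_m = ∑ᵣ ḡ_{mr} V^r`. -/
theorem mlow (st : Setup n U g L) (hx : x ∈ U) (m : Fin n) :
    ∑ j, pd (lamL L) j x * (L x)⁻¹ j m = ∑ r, gb g L x m r * Vu g L r x := by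
  have e1 : ∀ j : Fin n, pd (lamL L) j x * (L x)⁻¹ j m
      = ∑ s, Vu g L s x * (g x s j * (L x)⁻¹ j m) := by
    intro j
    rw [← st.lam_eq hx j, Finset.sum_mul]
    refine Finset.sum_congr rfl (fun s _ => ?_)
    rw [st.gsym hx j s]; ring
  rw [Finset.sum_congr rfl (fun j _ => e1 j), Finset.sum_comm]
  refine Finset.sum_congr rfl (fun s _ => ?_)
  rw [← Finset.mul_sum]
  rw [show ∑ j, g x s j * (L x)⁻¹ j m = gb g L x s m from (gb_apply s m).symm]
  rw [st.gbsym hx s m]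
  ring

/-- `∇ḡ` : `∂_k ḡ_{im} = Γ^s_{ki} ḡ_{sm} + Γ^s_{km} ḡ_{is} − mᵐ ḡ_{ik} − mⁱ ḡ_{km}`. -/
theorem nabla_gb (st : Setup n U g L) (hx : x ∈ U) (i m k : Fin n) :
    pd (fun y => gb g L y i m) k x
      = (∑ s, Christoffel g s k i x * gb g L x s m)
        + (∑ s, Christoffel g s k m x * gb g L x i s)
        - (∑ r, gb g L x m r * Vu g L r x) * gb g L x i k
        - (∑ r, gb g L x i r * Vu g L r x) * gb g L x k m := by
  have hdgb : ∀ a b : Fin n, DifferentiableAt ℝ (fun y => gb g L y a b) x :=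
    fun a b => st.dAt (st.sm_gb a b) hx
  have hdL : ∀ a b : Fin n, DifferentiableAt ℝ (fun y => L y a b) x :=
    fun a b => st.dAt (st.sm_L a b) hx
  -- differentiate ∑ₛ ḡ_{is} L^s_j = g_{ij}
  have key : ∀ j, ∑ s, pd (fun y => gb g L y i s) k x * L x s j
      = pd (fun y => g y i j) k x - ∑ s, gb g L x i s * pd (fun y => L y s j) k x := by
    intro j
    have h1 : pd (fun y => ∑ s, gb g L y i s * L y s j) k x = pd (fun y => g y i j) k x :=
      pd_congr_open st.hUo hx (fun y hy => st.gbL hy i j)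
    rw [pd_sum _ _ (fun s _ => (hdgb i s).fun_mul (hdL s j))] at h1
    rw [Finset.sum_congr rfl (fun s _ => pd_mul (hdgb i s) (hdL s j))] at h1
    rw [Finset.sum_add_distrib] at h1
    linarith [h1]
  -- evaluate the right-hand side R j
  have Rval : ∀ j, pd (fun y => g y i j) k x - ∑ s, gb g L x i s * pd (fun y => L y s j) k x
      = (∑ s, Christoffel g s k i x * g x s j)
        - pd (lamL L) j x * gb g L x i k
        - (∑ r, gb g L x i r * Vu g L r x) * g x j k
        + ∑ s, ∑ r, gb g L x i s * Christoffel g s k r x * L x r j := by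
    intro j
    have e1 : ∀ s : Fin n, gb g L x i s * pd (fun y => L y s j) k x
        = gb g L x i s * pd (lamL L) j x * (if s = k then (1:ℝ) else 0)
          + gb g L x i s * Vu g L s x * g x j k
          - (∑ r, gb g L x i s * Christoffel g s k r x * L x r j)
          + ∑ r, Christoffel g r k j x * (gb g L x i s * L x s r) := by
      intro s
      rw [st.nabla_L hx s j k, mul_add, mul_sub, mul_add, Finset.mul_sum, Finset.mul_sum]
      have r1 : ∀ r : Fin n, gb g L x i s * (Christoffel g s k r x * L x r j)
          = gb g L x i s * Christoffel g s k r x * L x r j := fun r => by ring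
      have r2 : ∀ r : Fin n, gb g L x i s * (Christoffel g r k j x * L x s r)
          = Christoffel g r k j x * (gb g L x i s * L x s r) := fun r => by ring
      rw [Finset.sum_congr rfl (fun r _ => r1 r), Finset.sum_congr rfl (fun r _ => r2 r)]
      ring
    rw [Finset.sum_congr rfl (fun s _ => e1 s)]
    rw [Finset.sum_add_distrib, Finset.sum_sub_distrib, Finset.sum_add_distrib]
    have c1 : ∑ s, gb g L x i s * pd (lamL L) j x * (if s = k then (1:ℝ) else 0)
        = pd (lamL L) j x * gb g L x i k := by
      rw [Finset.sum_eq_single k]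
      · simp; ring
      · intro b _ hb; simp [hb]
      · intro h; exact absurd (Finset.mem_univ k) h
    have c2 : ∑ s, gb g L x i s * Vu g L s x * g x j k
        = (∑ r, gb g L x i r * Vu g L r x) * g x j k := by
      rw [Finset.sum_mul]
    have c3 : ∑ s, ∑ r, Christoffel g r k j x * (gb g L x i s * L x s r)
        = ∑ r, Christoffel g r k j x * g x i r := by
      rw [Finset.sum_comm]
      refine Finset.sum_congr rfl (fun r _ => ?_)
      rw [← Finset.mul_sum, st.gbL hx i r]
    rw [c1, c2, c3]
    rw [st.nabla_g hx i j k]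
    have c4 : ∑ s, Christoffel g s k j x * g x i s = ∑ r, Christoffel g r k j x * g x i r := rfl
    rw [c4]
    ring
  have key2 : ∀ j, ∑ s, pd (fun y => gb g L y i s) k x * L x s j
      = (∑ s, Christoffel g s k i x * g x s j)
        - pd (lamL L) j x * gb g L x i k
        - (∑ r, gb g L x i r * Vu g L r x) * g x j k
        + ∑ s, ∑ r, gb g L x i s * Christoffel g s k r x * L x r j := by
    intro j; rw [key j, Rval j]
  have hsolve := st.solve_L hx (fun s => pd (fun y => gb g L y i s) k x) _ key2 m
  rw [hsolve]
  -- now expand the four contractions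
  have expand : ∀ j : Fin n,
      ((∑ s, Christoffel g s k i x * g x s j)
        - pd (lamL L) j x * gb g L x i k
        - (∑ r, gb g L x i r * Vu g L r x) * g x j k
        + ∑ s, ∑ r, gb g L x i s * Christoffel g s k r x * L x r j) * (L x)⁻¹ j m
      = (∑ s, Christoffel g s k i x * (g x s j * (L x)⁻¹ j m))
        - (pd (lamL L) j x * (L x)⁻¹ j m) * gb g L x i k
        - (∑ r, gb g L x i r * Vu g L r x) * (g x k j * (L x)⁻¹ j m)
        + ∑ s, ∑ r, gb g L x i s * Christoffel g s k r x * (L x r j * (L x)⁻¹ j m) := by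
    intro j
    have hA : (∑ s, Christoffel g s k i x * g x s j) * (L x)⁻¹ j m
        = ∑ s, Christoffel g s k i x * (g x s j * (L x)⁻¹ j m) := by
      rw [Finset.sum_mul]; exact Finset.sum_congr rfl (fun s _ => by ring)
    have hD : (∑ s, ∑ r, gb g L x i s * Christoffel g s k r x * L x r j) * (L x)⁻¹ j m
        = ∑ s, ∑ r, gb g L x i s * Christoffel g s k r x * (L x r j * (L x)⁻¹ j m) := by
      rw [Finset.sum_mul]
      refine Finset.sum_congr rfl (fun s _ => ?_)
      rw [Finset.sum_mul]
      exact Finset.sum_congr rfl (fun r _ => by ring)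
    have hG : g x j k = g x k j := st.gsym hx j k
    calc ((∑ s, Christoffel g s k i x * g x s j)
        - pd (lamL L) j x * gb g L x i k
        - (∑ r, gb g L x i r * Vu g L r x) * g x j k
        + ∑ s, ∑ r, gb g L x i s * Christoffel g s k r x * L x r j) * (L x)⁻¹ j m
        = (∑ s, Christoffel g s k i x * g x s j) * (L x)⁻¹ j m
          - (pd (lamL L) j x * (L x)⁻¹ j m) * gb g L x i k
          - (∑ r, gb g L x i r * Vu g L r x) * (g x j k * (L x)⁻¹ j m)
          + (∑ s, ∑ r, gb g L x i s * Christoffel g s k r x * L x r j) * (L x)⁻¹ j m := by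
          ring
      _ = _ := by rw [hA, hD, hG]
  rw [Finset.sum_congr rfl (fun j _ => expand j)]
  rw [Finset.sum_add_distrib, Finset.sum_sub_distrib, Finset.sum_sub_distrib]
  -- term A
  have tA : ∑ j, ∑ s, Christoffel g s k i x * (g x s j * (L x)⁻¹ j m)
      = ∑ s, Christoffel g s k i x * gb g L x s m := by
    rw [Finset.sum_comm]
    refine Finset.sum_congr rfl (fun s _ => ?_)
    rw [← Finset.mul_sum, ← gb_apply]
  -- term B
  have tB : ∑ j, (pd (lamL L) j x * (L x)⁻¹ j m) * gb g L x i k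
      = (∑ r, gb g L x m r * Vu g L r x) * gb g L x i k := by
    rw [← Finset.sum_mul, st.mlow hx m]
  -- term C
  have tC : ∑ j, (∑ r, gb g L x i r * Vu g L r x) * (g x k j * (L x)⁻¹ j m)
      = (∑ r, gb g L x i r * Vu g L r x) * gb g L x k m := by
    rw [← Finset.mul_sum, ← gb_apply]
  -- term D
  have tD : ∑ j, ∑ s, ∑ r, gb g L x i s * Christoffel g s k r x * (L x r j * (L x)⁻¹ j m)
      = ∑ s, Christoffel g s k m x * gb g L x i s := by
    rw [Finset.sum_comm]
    refine Finset.sum_congr rfl (fun s _ => ?_)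
    rw [Finset.sum_comm]
    have : ∀ r, ∑ j, gb g L x i s * Christoffel g s k r x * (L x r j * (L x)⁻¹ j m)
        = gb g L x i s * Christoffel g s k r x * (if r = m then (1:ℝ) else 0) := by
      intro r; rw [← Finset.mul_sum, st.Lmul hx r m]
    rw [Finset.sum_congr rfl (fun r _ => this r)]
    rw [Finset.sum_eq_single m]
    · simp; ring
    · intro b _ hb; simp [hb]
    · intro h; exact absurd (Finset.mem_univ m) h
  rw [tA, tB, tC, tD]
  ring

/-- KEY: `Γ̄^i_{jk} = Γ^i_{jk} − V^i ḡ_{jk}`. -/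
theorem chr_gb (st : Setup n U g L) (hx : x ∈ U) (i j k : Fin n) :
    Christoffel (gb g L) i j k x
      = Christoffel g i j k x - Vu g L i x * gb g L x j k := by
  unfold Christoffel
  have hbr : ∀ s : Fin n,
      pd (fun y => gb g L y s k) j x + pd (fun y => gb g L y s j) k x
        - pd (fun y => gb g L y j k) s x
      = 2 * (∑ r, Christoffel g r j k x * gb g L x s r)
        - 2 * ((∑ r, gb g L x s r * Vu g L r x) * gb g L x j k) := by
    intro s
    rw [st.nabla_gb hx s k j, st.nabla_gb hx s j k, st.nabla_gb hx j k s]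
    have s1 : ∑ r, Christoffel g r j s x * gb g L x r k
        = ∑ r, Christoffel g r s j x * gb g L x r k :=
      Finset.sum_congr rfl (fun r _ => by rw [st.chr_symm hx r j s])
    have s2 : ∑ r, Christoffel g r k s x * gb g L x r j
        = ∑ r, Christoffel g r s k x * gb g L x j r :=
      Finset.sum_congr rfl (fun r _ => by rw [st.chr_symm hx r k s, st.gbsym hx r j])
    have s3 : ∑ r, Christoffel g r k j x * gb g L x s r
        = ∑ r, Christoffel g r j k x * gb g L x s r :=
      Finset.sum_congr rfl (fun r _ => by rw [st.chr_symm hx r k j])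
    rw [s1, s2, s3]
    rw [st.gbsym hx k j, st.gbsym hx s j, st.gbsym hx s k]
    ring
  rw [Finset.sum_congr rfl (fun s _ => by rw [hbr s])]
  have e' : ∀ s : Fin n, (gb g L x)⁻¹ i s *
      (2 * (∑ r, Christoffel g r j k x * gb g L x s r)
        - 2 * ((∑ r, gb g L x s r * Vu g L r x) * gb g L x j k))
      = 2 * (∑ r, Christoffel g r j k x * ((gb g L x)⁻¹ i s * gb g L x s r))
        - 2 * ((∑ r, ((gb g L x)⁻¹ i s * gb g L x s r) * Vu g L r x) * gb g L x j k) := by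
    intro s
    have t1 : (gb g L x)⁻¹ i s * (∑ r, Christoffel g r j k x * gb g L x s r)
        = ∑ r, Christoffel g r j k x * ((gb g L x)⁻¹ i s * gb g L x s r) := by
      rw [Finset.mul_sum]; exact Finset.sum_congr rfl (fun r _ => by ring)
    have t2 : (gb g L x)⁻¹ i s * (∑ r, gb g L x s r * Vu g L r x)
        = ∑ r, ((gb g L x)⁻¹ i s * gb g L x s r) * Vu g L r x := by
      rw [Finset.mul_sum]; exact Finset.sum_congr rfl (fun r _ => by ring)
    calc (gb g L x)⁻¹ i s *
        (2 * (∑ r, Christoffel g r j k x * gb g L x s r)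
          - 2 * ((∑ r, gb g L x s r * Vu g L r x) * gb g L x j k))
        = 2 * ((gb g L x)⁻¹ i s * (∑ r, Christoffel g r j k x * gb g L x s r))
          - 2 * (((gb g L x)⁻¹ i s * (∑ r, gb g L x s r * Vu g L r x)) * gb g L x j k) := by
          ring
      _ = _ := by rw [t1, t2]
  rw [Finset.sum_congr rfl (fun s _ => e' s), Finset.sum_sub_distrib,
    ← Finset.mul_sum, ← Finset.mul_sum]
  have final1 : ∑ s, ∑ r, Christoffel g r j k x * ((gb g L x)⁻¹ i s * gb g L x s r)
      = Christoffel g i j k x := by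
    rw [Finset.sum_comm]
    have e2 : ∀ r, ∑ s, Christoffel g r j k x * ((gb g L x)⁻¹ i s * gb g L x s r)
        = Christoffel g r j k x * (if i = r then (1:ℝ) else 0) := by
      intro r; rw [← Finset.mul_sum, st.gbimul hx i r]
    rw [Finset.sum_congr rfl (fun r _ => e2 r)]
    simp
  have final2 : ∑ s, (∑ r, ((gb g L x)⁻¹ i s * gb g L x s r) * Vu g L r x) * gb g L x j k
      = Vu g L i x * gb g L x j k := by
    rw [← Finset.sum_mul]
    congr 1
    rw [Finset.sum_comm]
    have e2 : ∀ r, ∑ s, ((gb g L x)⁻¹ i s * gb g L x s r) * Vu g L r x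
        = (if i = r then (1:ℝ) else 0) * Vu g L r x := by
      intro r; rw [← Finset.sum_mul, st.gbimul hx i r]
    rw [Finset.sum_congr rfl (fun r _ => e2 r)]
    simp
  rw [final1, final2]
  have fold : (∑ s, ((g x)⁻¹ i s * pd (fun y => g y s k) j x +
      ((g x)⁻¹ i s * pd (fun y => g y s j) k x - (g x)⁻¹ i s * pd (fun y => g y j k) s x))) * (1/2)
      = Christoffel g i j k x := by
    unfold Christoffel
    rw [Finset.sum_mul, Finset.mul_sum]
    exact Finset.sum_congr rfl (fun s _ => by ring)
  have fold2 : ∑ s, (g x)⁻¹ i s * (pd (fun y => g y s k) j x + pd (fun y => g y s j) k x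
      - pd (fun y => g y j k) s x) = 2 * Christoffel g i j k x := by
    unfold Christoffel
    rw [Finset.mul_sum, Finset.mul_sum]
    exact Finset.sum_congr rfl (fun s _ => by ring)
  linear_combination (-(1/2) : ℝ) * fold2
end Setup
end Main3
section Main4
open Finset Matrix

variable {n : ℕ} {U : Set (Fin n → ℝ)} {g L : (Fin n → ℝ) → Matrix (Fin n) (Fin n) ℝ}
  {x : Fin n → ℝ}

namespace Setup

/-- Curvature of `ḡ`: `R̄^l_{ijk} = R^l_{ijk} − (∇_jλ^l) ḡ_{ik} + (∇_kλ^l) ḡ_{ij}`. -/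
theorem curv_gb (st : Setup n U g L) (hx : x ∈ U) (l i j k : Fin n) :
    Curv (gb g L) l i j k x
      = Curv g l i j k x - Qf g L l j x * gb g L x i k + Qf g L l k x * gb g L x i j := by
  have hdV : ∀ a : Fin n, DifferentiableAt ℝ (Vu g L a) x := fun a => st.dAt (st.sm_V a) hx
  have hdgb : ∀ a b : Fin n, DifferentiableAt ℝ (fun y => gb g L y a b) x :=
    fun a b => st.dAt (st.sm_gb a b) hx
  have hdchr : ∀ a b c : Fin n, DifferentiableAt ℝ (Christoffel g a b c) x :=
    fun a b c => st.dAt (st.sm_chr a b c) hx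
  have hA : pd (Christoffel (gb g L) l i k) j x
      = pd (Christoffel g l i k) j x
        - (pd (Vu g L l) j x * gb g L x i k + Vu g L l x * pd (fun y => gb g L y i k) j x) := by
    have hrepl : pd (Christoffel (gb g L) l i k) j x
        = pd (fun y => Christoffel g l i k y - Vu g L l y * gb g L y i k) j x :=
      pd_congr_open st.hUo hx (fun y hy => st.chr_gb hy l i k)
    rw [hrepl, pd_sub (hdchr l i k) ((hdV l).fun_mul (hdgb i k)), pd_mul (hdV l) (hdgb i k)]
  have hB : pd (Christoffel (gb g L) l i j) k x
      = pd (Christoffel g l i j) k x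
        - (pd (Vu g L l) k x * gb g L x i j + Vu g L l x * pd (fun y => gb g L y i j) k x) := by
    have hrepl : pd (Christoffel (gb g L) l i j) k x
        = pd (fun y => Christoffel g l i j y - Vu g L l y * gb g L y i j) k x :=
      pd_congr_open st.hUo hx (fun y hy => st.chr_gb hy l i j)
    rw [hrepl, pd_sub (hdchr l i j) ((hdV l).fun_mul (hdgb i j)), pd_mul (hdV l) (hdgb i j)]
  -- quadratic sum expansion
  have hq : ∀ s : Fin n,
      Christoffel (gb g L) l j s x * Christoffel (gb g L) s i k x
        - Christoffel (gb g L) l k s x * Christoffel (gb g L) s i j x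
      = (Christoffel g l j s x * Christoffel g s i k x
          - Christoffel g l k s x * Christoffel g s i j x)
        + (-(Christoffel g l j s x * Vu g L s x * gb g L x i k))
        + (Christoffel g l k s x * Vu g L s x * gb g L x i j)
        + (-(Vu g L l x * (gb g L x j s * Christoffel g s i k x)))
        + (Vu g L l x * (gb g L x k s * Christoffel g s i j x))
        + ((Vu g L l x * gb g L x i k) * (gb g L x j s * Vu g L s x))
        + (-((Vu g L l x * gb g L x i j) * (gb g L x k s * Vu g L s x))) := by
    intro s
    rw [st.chr_gb hx l j s, st.chr_gb hx s i k, st.chr_gb hx l k s, st.chr_gb hx s i j]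
    ring
  have hQsum : ∑ s, (Christoffel (gb g L) l j s x * Christoffel (gb g L) s i k x
        - Christoffel (gb g L) l k s x * Christoffel (gb g L) s i j x)
      = (∑ s, (Christoffel g l j s x * Christoffel g s i k x
          - Christoffel g l k s x * Christoffel g s i j x))
        - (∑ s, Christoffel g l j s x * Vu g L s x) * gb g L x i k
        + (∑ s, Christoffel g l k s x * Vu g L s x) * gb g L x i j
        - Vu g L l x * (∑ s, gb g L x j s * Christoffel g s i k x)
        + Vu g L l x * (∑ s, gb g L x k s * Christoffel g s i j x)
        + (Vu g L l x * gb g L x i k) * (∑ s, gb g L x j s * Vu g L s x)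
        - (Vu g L l x * gb g L x i j) * (∑ s, gb g L x k s * Vu g L s x) := by
    rw [Finset.sum_congr rfl (fun s _ => hq s)]
    simp only [Finset.sum_add_distrib, Finset.sum_neg_distrib]
    rw [← Finset.sum_mul, ← Finset.sum_mul, ← Finset.mul_sum, ← Finset.mul_sum,
      ← Finset.mul_sum, ← Finset.mul_sum]
    ring
  -- bridges
  have zb1 : ∑ s, Christoffel g s j k x * gb g L x i s
      = ∑ s, Christoffel g s k j x * gb g L x i s :=
    Finset.sum_congr rfl (fun s _ => by rw [st.chr_symm hx s j k])
  have zb2 : gb g L x k j = gb g L x j k := st.gbsym hx k j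
  have zb3 : ∑ s, Christoffel g s j i x * gb g L x s k
      = ∑ s, gb g L x k s * Christoffel g s i j x :=
    Finset.sum_congr rfl (fun s _ => by
      rw [st.chr_symm hx s j i, st.gbsym hx s k]; ring)
  have zb4 : ∑ s, Christoffel g s k i x * gb g L x s j
      = ∑ s, gb g L x j s * Christoffel g s i k x :=
    Finset.sum_congr rfl (fun s _ => by
      rw [st.chr_symm hx s k i, st.gbsym hx s j]; ring)
  have hQdef1 : Qf g L l j x = pd (Vu g L l) j x + ∑ s, Christoffel g l j s x * Vu g L s x := rfl
  have hQdef2 : Qf g L l k x = pd (Vu g L l) k x + ∑ s, Christoffel g l k s x * Vu g L s x := rfl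
  unfold Curv
  rw [hA, hB, hQsum, st.nabla_gb hx i k j, st.nabla_gb hx i j k, hQdef1, hQdef2]
  linear_combination (-(Vu g L l x)) * zb3 + (Vu g L l x) * zb4 - (Vu g L l x) * zb1
    - (Vu g L l x * (∑ r, gb g L x i r * Vu g L r x)) * zb2

/-- Ricci of `ḡ`. -/
theorem ricci_gb (st : Setup n U g L) (hx : x ∈ U) (i j : Fin n) :
    RicciOf (gb g L) i j x
      = RicciOf g i j x - (∑ s, Qf g L s s x) * gb g L x i j
        + ∑ s, Qf g L s j x * gb g L x i s := by
  unfold RicciOf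
  rw [Finset.sum_congr rfl (fun s _ => st.curv_gb hx s i s j)]
  rw [Finset.sum_add_distrib, Finset.sum_sub_distrib, ← Finset.sum_mul]

end Setup
end Main4
section Main5
open Finset Matrix

variable {n : ℕ} {U : Set (Fin n → ℝ)} {g L : (Fin n → ℝ) → Matrix (Fin n) (Fin n) ℝ}
  {x : Fin n → ℝ}

namespace Setup

/-- `∑ᵢ L^i_p ḡ_{ij} = g_{pj}`. -/
theorem LgbL (st : Setup n U g L) (hx : x ∈ U) (p j : Fin n) :
    ∑ i, L x i p * gb g L x i j = g x p j := by
  have e1 : ∀ i : Fin n, L x i p * gb g L x i j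
      = ∑ s, (L x i p * g x i s) * (L x)⁻¹ s j := by
    intro i; rw [gb_apply, Finset.mul_sum]
    exact Finset.sum_congr rfl (fun s _ => by ring)
  rw [Finset.sum_congr rfl (fun i _ => e1 i), Finset.sum_comm]
  have e2 : ∀ s : Fin n, ∑ i, (L x i p * g x i s) * (L x)⁻¹ s j
      = lowL g L x s p * (L x)⁻¹ s j := by
    intro s
    rw [← Finset.sum_mul]
    have h0 : ∑ i, L x i p * g x i s = lowL g L x p s := rfl
    rw [h0, st.hgeo.2.1 x hx p s]
  rw [Finset.sum_congr rfl (fun s _ => e2 s)]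
  have e3 : ∀ s : Fin n, lowL g L x s p * (L x)⁻¹ s j
      = ∑ r, g x r p * (L x r s * (L x)⁻¹ s j) := by
    intro s
    have h0 : lowL g L x s p = ∑ r, L x r s * g x r p := rfl
    rw [h0, Finset.sum_mul]
    exact Finset.sum_congr rfl (fun r _ => by ring)
  rw [Finset.sum_congr rfl (fun s _ => e3 s), Finset.sum_comm]
  have e4 : ∀ r : Fin n, ∑ s, g x r p * (L x r s * (L x)⁻¹ s j)
      = g x r p * (if r = j then (1:ℝ) else 0) := by
    intro r; rw [← Finset.mul_sum, st.Lmul hx r j]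
  rw [Finset.sum_congr rfl (fun r _ => e4 r)]
  rw [Finset.sum_eq_single j]
  · simp
    exact st.gsym hx j p
  · intro b _ hb; simp [hb]
  · intro h; exact absurd (Finset.mem_univ j) h

/-- `∑ₚ g⁻¹^{rp} (lowL)_{pj} = L^r_j`. -/
theorem giLow (st : Setup n U g L) (hx : x ∈ U) (r j : Fin n) :
    ∑ p, (g x)⁻¹ r p * lowL g L x p j = L x r j := by
  have e1 : ∀ p : Fin n, (g x)⁻¹ r p * lowL g L x p j
      = ∑ m, L x m j * ((g x)⁻¹ r p * g x m p) := by
    intro p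
    rw [st.hgeo.2.1 x hx p j]
    have h0 : lowL g L x j p = ∑ m, L x m j * g x m p := rfl
    rw [h0, Finset.mul_sum]
    exact Finset.sum_congr rfl (fun m _ => by ring)
  rw [Finset.sum_congr rfl (fun p _ => e1 p), Finset.sum_comm]
  have e2 : ∀ m : Fin n, ∑ p, L x m j * ((g x)⁻¹ r p * g x m p)
      = L x m j * (if r = m then (1:ℝ) else 0) := by
    intro m
    rw [← Finset.mul_sum]
    congr 1
    rw [Finset.sum_congr rfl (fun p _ => by rw [st.gsym hx m p]), st.gimul hx r m]
  rw [Finset.sum_congr rfl (fun m _ => e2 m)]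
  rw [Finset.sum_eq_single r]
  · simp
  · intro b _ hb; simp [Ne.symm hb]
  · intro h; exact absurd (Finset.mem_univ r) h

/-- `Q^r_j = μ̃ δ^r_j − (S/n) L^r_j` with `μ̃ = (S·trL − S')/(n(n−1))`. -/
theorem Qval (st : Setup n U g L) (hn : 2 ≤ n) (S S' : ℝ)
    (hEin : ∀ x ∈ U, ∀ i j : Fin n, RicciOf g i j x = (S / (n : ℝ)) * g x i j)
    (hEin' : ∀ x ∈ U, ∀ i j : Fin n,
      RicciOf (fun y => g y * (L y)⁻¹) i j x = (S' / (n : ℝ)) * (g x * (L x)⁻¹) i j)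
    (hx : x ∈ U) (r j : Fin n) :
    Qf g L r j x
      = (S * (∑ s, L x s s) - S') / ((n : ℝ) * ((n : ℝ) - 1)) * (if r = j then (1:ℝ) else 0)
        - (S / (n : ℝ)) * L x r j := by
  have hN2 : (2:ℝ) ≤ (n:ℝ) := by exact_mod_cast hn
  have hN0 : (n:ℝ) ≠ 0 := by linarith
  have hN1 : (n:ℝ) - 1 ≠ 0 := by intro h; nlinarith
  obtain ⟨D, hD⟩ : ∃ D : ℝ, D = ∑ s, Qf g L s s x := ⟨_, rfl⟩
  obtain ⟨μ, hμdef⟩ : ∃ μ : ℝ, μ = S' / (n : ℝ) + D := ⟨_, rfl⟩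
  have step1 : ∀ i j : Fin n, (S' / (n : ℝ)) * gb g L x i j
      = (S / (n : ℝ)) * g x i j - D * gb g L x i j + ∑ s, Qf g L s j x * gb g L x i s := by
    intro i j
    have h1 : RicciOf (gb g L) i j x = (S' / (n : ℝ)) * gb g L x i j := hEin' x hx i j
    rw [st.ricci_gb hx i j, hEin x hx i j, ← hD] at h1
    linarith [h1]
  have step2 : ∀ p j : Fin n, (S' / (n : ℝ)) * g x p j
      = (S / (n : ℝ)) * lowL g L x p j - D * g x p j + ∑ s, Qf g L s j x * g x p s := by
    intro p j
    calc (S' / (n : ℝ)) * g x p j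
        = ∑ i, L x i p * ((S' / (n : ℝ)) * gb g L x i j) := by
          rw [show ∑ i, L x i p * ((S' / (n : ℝ)) * gb g L x i j)
              = (S' / (n : ℝ)) * ∑ i, L x i p * gb g L x i j from by
            rw [Finset.mul_sum]; exact Finset.sum_congr rfl (fun i _ => by ring)]
          rw [st.LgbL hx p j]
      _ = ∑ i, (L x i p * ((S / (n : ℝ)) * g x i j) - L x i p * (D * gb g L x i j)
            + ∑ s, Qf g L s j x * (L x i p * gb g L x i s)) := by
          refine Finset.sum_congr rfl (fun i _ => ?_)
          rw [step1 i j, mul_add, mul_sub, Finset.mul_sum]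
          rw [Finset.sum_congr rfl (fun s _ =>
            show L x i p * (Qf g L s j x * gb g L x i s)
              = Qf g L s j x * (L x i p * gb g L x i s) from by ring)]
      _ = (S / (n : ℝ)) * lowL g L x p j - D * g x p j + ∑ s, Qf g L s j x * g x p s := by
          rw [Finset.sum_add_distrib, Finset.sum_sub_distrib]
          have c1 : ∑ i, L x i p * ((S / (n : ℝ)) * g x i j)
              = (S / (n : ℝ)) * lowL g L x p j := by
            have h0 : lowL g L x p j = ∑ i, L x i p * g x i j := rfl
            rw [h0, Finset.mul_sum]
            exact Finset.sum_congr rfl (fun i _ => by ring)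
          have c2 : ∑ i, L x i p * (D * gb g L x i j) = D * g x p j := by
            rw [← st.LgbL hx p j, Finset.mul_sum]
            exact Finset.sum_congr rfl (fun i _ => by ring)
          have c3 : ∑ i, ∑ s, Qf g L s j x * (L x i p * gb g L x i s)
              = ∑ s, Qf g L s j x * g x p s := by
            rw [Finset.sum_comm]
            refine Finset.sum_congr rfl (fun s _ => ?_)
            rw [← Finset.mul_sum, st.LgbL hx p s]
          rw [c1, c2, c3]
  have step3 : ∀ r j : Fin n, Qf g L r j x
      = μ * (if r = j then (1:ℝ) else 0) - (S / (n : ℝ)) * L x r j := by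
    intro r j
    calc Qf g L r j x = ∑ p, (g x)⁻¹ r p * (∑ s, Qf g L s j x * g x p s) := by
          rw [Finset.sum_congr rfl (fun p _ => Finset.mul_sum _ _ _), Finset.sum_comm]
          have e : ∀ s : Fin n, ∑ p, (g x)⁻¹ r p * (Qf g L s j x * g x p s)
              = Qf g L s j x * (if r = s then (1:ℝ) else 0) := by
            intro s
            rw [Finset.sum_congr rfl (fun p _ =>
              show (g x)⁻¹ r p * (Qf g L s j x * g x p s)
                = Qf g L s j x * ((g x)⁻¹ r p * g x p s) from by ring),
              ← Finset.mul_sum, st.gimul hx r s]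
          rw [Finset.sum_congr rfl (fun s _ => e s)]
          rw [Finset.sum_eq_single r]
          · simp
          · intro b _ hb; simp [Ne.symm hb]
          · intro h; exact absurd (Finset.mem_univ r) h
      _ = ∑ p, (g x)⁻¹ r p * ((S' / (n : ℝ)) * g x p j + D * g x p j
            - (S / (n : ℝ)) * lowL g L x p j) := by
          refine Finset.sum_congr rfl (fun p _ => ?_)
          congr 1
          linarith [step2 p j]
      _ = μ * (if r = j then (1:ℝ) else 0) - (S / (n : ℝ)) * L x r j := by
          rw [Finset.sum_congr rfl (fun p _ =>
            show (g x)⁻¹ r p * ((S' / (n : ℝ)) * g x p j + D * g x p j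
                - (S / (n : ℝ)) * lowL g L x p j)
              = (S' / (n : ℝ)) * ((g x)⁻¹ r p * g x p j)
                + D * ((g x)⁻¹ r p * g x p j)
                - (S / (n : ℝ)) * ((g x)⁻¹ r p * lowL g L x p j) from by ring)]
          rw [Finset.sum_sub_distrib, Finset.sum_add_distrib, ← Finset.mul_sum,
            ← Finset.mul_sum, ← Finset.mul_sum, st.gimul hx r j, st.giLow hx r j]
          rw [hμdef]; ring
  have htr : D = (n : ℝ) * μ - (S / (n : ℝ)) * ∑ s, L x s s := by
    have e : ∀ r : Fin n, Qf g L r r x = μ - (S / (n : ℝ)) * L x r r := by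
      intro r; rw [step3 r r]; simp
    calc D = ∑ r, Qf g L r r x := hD
      _ = ∑ r, (μ - (S / (n : ℝ)) * L x r r) := Finset.sum_congr rfl (fun r _ => e r)
      _ = (n : ℝ) * μ - (S / (n : ℝ)) * ∑ s, L x s s := by
          rw [Finset.sum_sub_distrib, Finset.sum_const, ← Finset.mul_sum]
          simp [Finset.card_univ, mul_comm]
  have key : μ = S' / (n : ℝ) + ((n : ℝ) * μ - (S / (n : ℝ)) * ∑ s, L x s s) := by
    conv_lhs => rw [hμdef, htr]
  have hμval : μ = (S * (∑ s, L x s s) - S') / ((n : ℝ) * ((n : ℝ) - 1)) := by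
    have key2 : μ * (n:ℝ) = S' + ((n : ℝ) * μ - (S / (n : ℝ)) * ∑ s, L x s s) * (n:ℝ) := by
      conv_lhs => rw [key]
      rw [add_mul, div_mul_cancel₀ _ hN0]
    have h1 : (S / (n:ℝ)) * (∑ s, L x s s) * (n:ℝ) = S * (∑ s, L x s s) := by
      field_simp
    have key3 : μ * (n:ℝ) = S' + (n:ℝ) * μ * (n:ℝ) - S * (∑ s, L x s s) := by
      rw [key2, sub_mul, h1]; ring
    rw [eq_div_iff (mul_ne_zero hN0 hN1)]
    linear_combination (-1 : ℝ) * key3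
  rw [step3 r j, hμval]
end Setup
end Main5
section Main6
open Finset Matrix

variable {n : ℕ} {U : Set (Fin n → ℝ)} {g L : (Fin n → ℝ) → Matrix (Fin n) (Fin n) ℝ}
  {x : Fin n → ℝ}

namespace Setup

/-- Contracted Ricci identity for the vector field `λ^·`. -/
theorem ricci_contract (st : Setup n U g L) (hx : x ∈ U) (j : Fin n) :
    (∑ k, (pd (Qf g L k j) k x + ∑ s, Christoffel g k k s x * Qf g L s j x
        - ∑ s, Christoffel g s k j x * Qf g L k s x))
      - (∑ k, (pd (Qf g L k k) j x + ∑ s, Christoffel g k j s x * Qf g L s k x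
        - ∑ s, Christoffel g s j k x * Qf g L k s x))
    = ∑ s, RicciOf g s j x * Vu g L s x := by
  have hdV : ∀ a : Fin n, DifferentiableAt ℝ (Vu g L a) x := fun a => st.dAt (st.sm_V a) hx
  have hdpdV : ∀ a b : Fin n, DifferentiableAt ℝ (pd (Vu g L a) b) x :=
    fun a b => st.dAt (SmoothAux.pdSmooth st.hUo (st.sm_V a)) hx
  have hdchr : ∀ a b c : Fin n, DifferentiableAt ℝ (Christoffel g a b c) x :=
    fun a b c => st.dAt (st.sm_chr a b c) hx
  have pdQ : ∀ l a c : Fin n, pd (Qf g L l a) c x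
      = pd (pd (Vu g L l) a) c x
        + ∑ s, (pd (Christoffel g l a s) c x * Vu g L s x
            + Christoffel g l a s x * pd (Vu g L s) c x) := by
    intro l a c
    have h0 : Qf g L l a = fun y => pd (Vu g L l) a y
        + ∑ s, Christoffel g l a s y * Vu g L s y := rfl
    rw [h0, pd_add (hdpdV l a)
      (DifferentiableAt.fun_sum (fun s _ => (hdchr l a s).fun_mul (hdV s))),
      pd_sum _ _ (fun s _ => (hdchr l a s).fun_mul (hdV s))]
    congr 1
    exact Finset.sum_congr rfl (fun s _ => pd_mul (hdchr l a s) (hdV s))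
  have hQv : ∀ a b : Fin n, Qf g L a b x
      = pd (Vu g L a) b x + ∑ r, Christoffel g a b r x * Vu g L r x := fun a b => rfl
  -- Normal form of the first bracket
  have eL1 : (∑ k, (pd (Qf g L k j) k x + ∑ s, Christoffel g k k s x * Qf g L s j x
        - ∑ s, Christoffel g s k j x * Qf g L k s x))
      = (∑ k, pd (pd (Vu g L k) j) k x)
        + ((∑ k, ∑ s, pd (Christoffel g k j s) k x * Vu g L s x)
          + (∑ k, ∑ s, Christoffel g k j s x * pd (Vu g L s) k x))
        + ((∑ k, ∑ s, Christoffel g k k s x * pd (Vu g L s) j x)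
          + (∑ k, ∑ s, Christoffel g k k s x * ∑ r, Christoffel g s j r x * Vu g L r x))
        - ((∑ k, ∑ s, Christoffel g s k j x * pd (Vu g L k) s x)
          + (∑ k, ∑ s, Christoffel g s k j x * ∑ r, Christoffel g k s r x * Vu g L r x)) := by
    have e1 : ∀ k : Fin n, pd (Qf g L k j) k x + ∑ s, Christoffel g k k s x * Qf g L s j x
        - ∑ s, Christoffel g s k j x * Qf g L k s x
        = pd (pd (Vu g L k) j) k x
          + (∑ s, (pd (Christoffel g k j s) k x * Vu g L s x
              + Christoffel g k j s x * pd (Vu g L s) k x))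
          + (∑ s, (Christoffel g k k s x * pd (Vu g L s) j x
              + Christoffel g k k s x * ∑ r, Christoffel g s j r x * Vu g L r x))
          - (∑ s, (Christoffel g s k j x * pd (Vu g L k) s x
              + Christoffel g s k j x * ∑ r, Christoffel g k s r x * Vu g L r x)) := by
      intro k
      rw [pdQ k j k]
      rw [Finset.sum_congr rfl (fun s _ => show Christoffel g k k s x * Qf g L s j x
        = Christoffel g k k s x * pd (Vu g L s) j x
          + Christoffel g k k s x * ∑ r, Christoffel g s j r x * Vu g L r x from by
        rw [hQv s j, mul_add])]
      rw [Finset.sum_congr rfl (fun s _ => show Christoffel g s k j x * Qf g L k s x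
        = Christoffel g s k j x * pd (Vu g L k) s x
          + Christoffel g s k j x * ∑ r, Christoffel g k s r x * Vu g L r x from by
        rw [hQv k s, mul_add])]
    rw [Finset.sum_congr rfl (fun k _ => e1 k)]
    simp only [Finset.sum_add_distrib, Finset.sum_sub_distrib]
  -- Normal form of the second bracket
  have eL2 : (∑ k, (pd (Qf g L k k) j x + ∑ s, Christoffel g k j s x * Qf g L s k x
        - ∑ s, Christoffel g s j k x * Qf g L k s x))
      = (∑ k, pd (pd (Vu g L k) k) j x)
        + ((∑ k, ∑ s, pd (Christoffel g k k s) j x * Vu g L s x)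
          + (∑ k, ∑ s, Christoffel g k k s x * pd (Vu g L s) j x))
        + ((∑ k, ∑ s, Christoffel g k j s x * pd (Vu g L s) k x)
          + (∑ k, ∑ s, Christoffel g k j s x * ∑ r, Christoffel g s k r x * Vu g L r x))
        - ((∑ k, ∑ s, Christoffel g s j k x * pd (Vu g L k) s x)
          + (∑ k, ∑ s, Christoffel g s j k x * ∑ r, Christoffel g k s r x * Vu g L r x)) := by
    have e1 : ∀ k : Fin n, pd (Qf g L k k) j x + ∑ s, Christoffel g k j s x * Qf g L s k x
        - ∑ s, Christoffel g s j k x * Qf g L k s x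
        = pd (pd (Vu g L k) k) j x
          + (∑ s, (pd (Christoffel g k k s) j x * Vu g L s x
              + Christoffel g k k s x * pd (Vu g L s) j x))
          + (∑ s, (Christoffel g k j s x * pd (Vu g L s) k x
              + Christoffel g k j s x * ∑ r, Christoffel g s k r x * Vu g L r x))
          - (∑ s, (Christoffel g s j k x * pd (Vu g L k) s x
              + Christoffel g s j k x * ∑ r, Christoffel g k s r x * Vu g L r x)) := by
      intro k
      rw [pdQ k k j]
      rw [Finset.sum_congr rfl (fun s _ => show Christoffel g k j s x * Qf g L s k x
        = Christoffel g k j s x * pd (Vu g L s) k x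
          + Christoffel g k j s x * ∑ r, Christoffel g s k r x * Vu g L r x from by
        rw [hQv s k, mul_add])]
      rw [Finset.sum_congr rfl (fun s _ => show Christoffel g s j k x * Qf g L k s x
        = Christoffel g s j k x * pd (Vu g L k) s x
          + Christoffel g s j k x * ∑ r, Christoffel g k s r x * Vu g L r x from by
        rw [hQv k s, mul_add])]
    rw [Finset.sum_congr rfl (fun k _ => e1 k)]
    simp only [Finset.sum_add_distrib, Finset.sum_sub_distrib]
  -- Normal form of the right-hand side
  have eR : ∑ s, RicciOf g s j x * Vu g L s x
      = (∑ s, ∑ k, pd (Christoffel g k s j) k x * Vu g L s x)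
        - (∑ s, ∑ k, pd (Christoffel g k s k) j x * Vu g L s x)
        + (∑ s, ∑ k, (∑ r, Christoffel g k k r x * Christoffel g r s j x) * Vu g L s x)
        - (∑ s, ∑ k, (∑ r, Christoffel g k j r x * Christoffel g r s k x) * Vu g L s x) := by
    have e1 : ∀ s : Fin n, RicciOf g s j x * Vu g L s x
        = ∑ k, (pd (Christoffel g k s j) k x * Vu g L s x
            - pd (Christoffel g k s k) j x * Vu g L s x
            + (∑ r, Christoffel g k k r x * Christoffel g r s j x) * Vu g L s x
            - (∑ r, Christoffel g k j r x * Christoffel g r s k x) * Vu g L s x) := by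
      intro s
      have h0 : RicciOf g s j x = ∑ k, Curv g k s k j x := rfl
      rw [h0, Finset.sum_mul]
      refine Finset.sum_congr rfl (fun k _ => ?_)
      have h1 : Curv g k s k j x = pd (Christoffel g k s j) k x - pd (Christoffel g k s k) j x
          + ∑ r, (Christoffel g k k r x * Christoffel g r s j x
            - Christoffel g k j r x * Christoffel g r s k x) := rfl
      rw [h1, Finset.sum_sub_distrib]
      ring
    rw [Finset.sum_congr rfl (fun s _ => e1 s)]
    simp only [Finset.sum_add_distrib, Finset.sum_sub_distrib]
  -- bridges
  have br0 : ∑ k, pd (pd (Vu g L k) j) k x = ∑ k, pd (pd (Vu g L k) k) j x :=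
    Finset.sum_congr rfl (fun k _ => SmoothAux.comm st.hUo (st.sm_V k) hx j k)
  have br1 : ∑ k, ∑ s, pd (Christoffel g k j s) k x * Vu g L s x
      = ∑ s, ∑ k, pd (Christoffel g k s j) k x * Vu g L s x := by
    rw [Finset.sum_comm]
    refine Finset.sum_congr rfl (fun s _ => Finset.sum_congr rfl (fun k _ => ?_))
    rw [pd_congr_open st.hUo hx (fun y hy => st.chr_symm hy k j s)]
  have br2 : ∑ k, ∑ s, pd (Christoffel g k k s) j x * Vu g L s x
      = ∑ s, ∑ k, pd (Christoffel g k s k) j x * Vu g L s x := by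
    rw [Finset.sum_comm]
    refine Finset.sum_congr rfl (fun s _ => Finset.sum_congr rfl (fun k _ => ?_))
    rw [pd_congr_open st.hUo hx (fun y hy => st.chr_symm hy k k s)]
  have br3 : ∑ k, ∑ s, Christoffel g k k s x * ∑ r, Christoffel g s j r x * Vu g L r x
      = ∑ s, ∑ k, (∑ r, Christoffel g k k r x * Christoffel g r s j x) * Vu g L s x := by
    have h1 : ∀ k : Fin n, ∑ s, Christoffel g k k s x * ∑ r, Christoffel g s j r x * Vu g L r x
        = ∑ s, ∑ r, Christoffel g k k s x * (Christoffel g s j r x * Vu g L r x) :=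
      fun k => Finset.sum_congr rfl (fun s _ => Finset.mul_sum _ _ _)
    rw [Finset.sum_congr rfl (fun k _ => h1 k)]
    rw [Finset.sum_congr rfl (fun k _ => Finset.sum_comm)]
    have h2 : ∀ k s : Fin n, ∑ r, Christoffel g k k r x * (Christoffel g r j s x * Vu g L s x)
        = (∑ r, Christoffel g k k r x * Christoffel g r s j x) * Vu g L s x := by
      intro k s
      rw [Finset.sum_mul]
      refine Finset.sum_congr rfl (fun r _ => ?_)
      rw [st.chr_symm hx r j s]; ring
    rw [Finset.sum_congr rfl (fun k _ => Finset.sum_congr rfl (fun s _ => h2 k s))]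
    exact Finset.sum_comm
  have br4 : ∑ k, ∑ s, Christoffel g k j s x * ∑ r, Christoffel g s k r x * Vu g L r x
      = ∑ s, ∑ k, (∑ r, Christoffel g k j r x * Christoffel g r s k x) * Vu g L s x := by
    have h1 : ∀ k : Fin n, ∑ s, Christoffel g k j s x * ∑ r, Christoffel g s k r x * Vu g L r x
        = ∑ s, ∑ r, Christoffel g k j s x * (Christoffel g s k r x * Vu g L r x) :=
      fun k => Finset.sum_congr rfl (fun s _ => Finset.mul_sum _ _ _)
    rw [Finset.sum_congr rfl (fun k _ => h1 k)]
    rw [Finset.sum_congr rfl (fun k _ => Finset.sum_comm)]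
    have h2 : ∀ k s : Fin n, ∑ r, Christoffel g k j r x * (Christoffel g r k s x * Vu g L s x)
        = (∑ r, Christoffel g k j r x * Christoffel g r s k x) * Vu g L s x := by
      intro k s
      rw [Finset.sum_mul]
      refine Finset.sum_congr rfl (fun r _ => ?_)
      rw [st.chr_symm hx r k s]; ring
    rw [Finset.sum_congr rfl (fun k _ => Finset.sum_congr rfl (fun s _ => h2 k s))]
    exact Finset.sum_comm
  have br5 : ∑ k, ∑ s, Christoffel g s k j x * pd (Vu g L k) s x
      = ∑ k, ∑ s, Christoffel g s j k x * pd (Vu g L k) s x :=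
    Finset.sum_congr rfl (fun k _ => Finset.sum_congr rfl (fun s _ => by
      rw [st.chr_symm hx s k j]))
  have br8 : ∑ k, ∑ s, Christoffel g s k j x * ∑ r, Christoffel g k s r x * Vu g L r x
      = ∑ k, ∑ s, Christoffel g s j k x * ∑ r, Christoffel g k s r x * Vu g L r x :=
    Finset.sum_congr rfl (fun k _ => Finset.sum_congr rfl (fun s _ => by
      rw [st.chr_symm hx s k j]))
  rw [eL1, eL2, eR]
  linear_combination br0 + br1 - br2 + br3 - br4 - br5 - br8
end Setup
end Main6
section Main7
open Finset Matrix

variable {n : ℕ} {U : Set (Fin n → ℝ)} {g L : (Fin n → ℝ) → Matrix (Fin n) (Fin n) ℝ}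
  {x : Fin n → ℝ}

namespace Setup

theorem tr_pd (st : Setup n U g L) (hx : x ∈ U) (j : Fin n) :
    pd (fun y => ∑ s, L y s s) j x = 2 * pd (lamL L) j x := by
  have hdL : ∀ a b : Fin n, DifferentiableAt ℝ (fun y => L y a b) x :=
    fun a b => st.dAt (st.sm_L a b) hx
  have h0 : pd (lamL L) j x = (1/2) * pd (fun y => ∑ s, L y s s) j x := by
    have h1 : lamL L = fun y => (1/2 : ℝ) * ∑ s, L y s s := rfl
    rw [h1, pd_cmul _ (DifferentiableAt.fun_sum (fun s _ => hdL s s))]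
  rw [h0]; ring

theorem lam_vanishes (st : Setup n U g L) (hn : 2 ≤ n) (S S' : ℝ) (hS : S ≠ 0)
    (hEin : ∀ x ∈ U, ∀ i j : Fin n, RicciOf g i j x = (S / (n : ℝ)) * g x i j)
    (hEin' : ∀ x ∈ U, ∀ i j : Fin n,
      RicciOf (fun y => g y * (L y)⁻¹) i j x = (S' / (n : ℝ)) * (g x * (L x)⁻¹) i j)
    (hx : x ∈ U) (j : Fin n) : pd (lamL L) j x = 0 := by
  have hN2 : (2:ℝ) ≤ (n:ℝ) := by exact_mod_cast hn
  have hN0 : (n:ℝ) ≠ 0 := by linarith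
  have hN1 : (n:ℝ) - 1 ≠ 0 := by intro h; nlinarith
  set Ft : (Fin n → ℝ) → ℝ :=
    fun y => (S * (∑ s, L y s s) - S') / ((n : ℝ) * ((n : ℝ) - 1)) with hFt
  have hQx : ∀ y ∈ U, ∀ r i : Fin n,
      Qf g L r i y = Ft y * (if r = i then (1:ℝ) else 0) - (S / (n : ℝ)) * L y r i :=
    fun y hy r i => st.Qval hn S S' hEin hEin' hy r i
  -- differentiability of Ft and friends
  have hdL : ∀ a b : Fin n, DifferentiableAt ℝ (fun y => L y a b) x :=
    fun a b => st.dAt (st.sm_L a b) hx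
  have smT : ContDiffOn ℝ (⊤ : ℕ∞) (fun y => ∑ s, L y s s) U :=
    SmoothAux.finset_sum _ _ (fun s _ => st.sm_L s s)
  have smFt : ContDiffOn ℝ (⊤ : ℕ∞) Ft U := by
    rw [hFt]
    exact ((contDiffOn_const.mul smT).sub contDiffOn_const).div_const _
  have hdFt : DifferentiableAt ℝ Ft x := st.dAt smFt hx
  -- pd of Q
  have pdQval : ∀ k i c : Fin n, pd (Qf g L k i) c x
      = (if k = i then (1:ℝ) else 0) * pd Ft c x
        - (S / (n : ℝ)) * pd (fun y => L y k i) c x := by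
    intro k i c
    have hrepl : pd (Qf g L k i) c x
        = pd (fun y => Ft y * (if k = i then (1:ℝ) else 0) - (S / (n : ℝ)) * L y k i) c x :=
      pd_congr_open st.hUo hx (fun y hy => hQx y hy k i)
    rw [hrepl, pd_sub (hdFt.fun_mul (differentiableAt_const _))
      ((differentiableAt_const _).fun_mul (hdL k i)),
      pd_mul hdFt (differentiableAt_const _), pd_cmul _ (hdL k i), pd_const]
    ring
  have hVg : ∑ k, Vu g L k x * g x j k = pd (lamL L) j x := by
    rw [← st.lam_eq hx j]
    exact Finset.sum_congr rfl (fun k _ => by ring)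
  -- first bracket
  have hA1 : (∑ k, (pd (Qf g L k j) k x + ∑ s, Christoffel g k k s x * Qf g L s j x
        - ∑ s, Christoffel g s k j x * Qf g L k s x))
      = pd Ft j x - (S / (n : ℝ)) * (((n:ℝ) + 1) * pd (lamL L) j x) := by
    have e1 : ∀ k : Fin n, pd (Qf g L k j) k x + ∑ s, Christoffel g k k s x * Qf g L s j x
        - ∑ s, Christoffel g s k j x * Qf g L k s x
        = (if k = j then (1:ℝ) else 0) * pd Ft k x
          - (S / (n : ℝ)) * (pd (lamL L) j x + Vu g L k x * g x j k) := by
      intro k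
      have c1 : ∑ s, Christoffel g k k s x * Qf g L s j x
          = Ft x * Christoffel g k k j x - (S / (n : ℝ)) * ∑ s, Christoffel g k k s x * L x s j := by
        rw [Finset.sum_congr rfl (fun s _ => show Christoffel g k k s x * Qf g L s j x
          = Ft x * (Christoffel g k k s x * (if s = j then (1:ℝ) else 0))
            - (S / (n : ℝ)) * (Christoffel g k k s x * L x s j) from by
          rw [hQx x hx s j]; ring)]
        rw [Finset.sum_sub_distrib, ← Finset.mul_sum, ← Finset.mul_sum]
        congr 2
        rw [Finset.sum_eq_single j]
        · simp
        · intro b _ hb; simp [hb]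
        · intro h; exact absurd (Finset.mem_univ j) h
      have c2 : ∑ s, Christoffel g s k j x * Qf g L k s x
          = Ft x * Christoffel g k k j x - (S / (n : ℝ)) * ∑ s, Christoffel g s k j x * L x k s := by
        rw [Finset.sum_congr rfl (fun s _ => show Christoffel g s k j x * Qf g L k s x
          = Ft x * (Christoffel g s k j x * (if k = s then (1:ℝ) else 0))
            - (S / (n : ℝ)) * (Christoffel g s k j x * L x k s) from by
          rw [hQx x hx k s]; ring)]
        rw [Finset.sum_sub_distrib, ← Finset.mul_sum, ← Finset.mul_sum]
        congr 2
        rw [Finset.sum_eq_single k]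
        · simp
        · intro b _ hb; simp [Ne.symm hb]
        · intro h; exact absurd (Finset.mem_univ k) h
      have c3 : pd (fun y => L y k j) k x
          = pd (lamL L) j x * (if k = k then (1:ℝ) else 0) + Vu g L k x * g x j k
            - (∑ s, Christoffel g k k s x * L x s j) + ∑ s, Christoffel g s k j x * L x k s :=
        st.nabla_L hx k j k
      rw [pdQval k j k, c1, c2, c3]
      simp only [if_true]
      ring
    rw [Finset.sum_congr rfl (fun k _ => e1 k), Finset.sum_sub_distrib]
    have d1 : ∑ k, (if k = j then (1:ℝ) else 0) * pd Ft k x = pd Ft j x := by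
      rw [Finset.sum_eq_single j]
      · simp
      · intro b _ hb; simp [hb]
      · intro h; exact absurd (Finset.mem_univ j) h
    have d2 : ∑ k, (S / (n : ℝ)) * (pd (lamL L) j x + Vu g L k x * g x j k)
        = (S / (n : ℝ)) * (((n:ℝ)) * pd (lamL L) j x + pd (lamL L) j x) := by
      rw [← Finset.mul_sum]
      congr 1
      rw [Finset.sum_add_distrib, Finset.sum_const, hVg]
      simp [Finset.card_univ, mul_comm]
    rw [d1, d2]
    ring
  -- second bracket
  have hA2 : (∑ k, (pd (Qf g L k k) j x + ∑ s, Christoffel g k j s x * Qf g L s k x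
        - ∑ s, Christoffel g s j k x * Qf g L k s x))
      = (n:ℝ) * pd Ft j x - (S / (n : ℝ)) * (2 * pd (lamL L) j x) := by
    have e1 : ∀ k : Fin n, pd (Qf g L k k) j x + ∑ s, Christoffel g k j s x * Qf g L s k x
        - ∑ s, Christoffel g s j k x * Qf g L k s x
        = pd Ft j x - (S / (n : ℝ)) * pd (fun y => L y k k) j x
          - (S / (n : ℝ)) * (∑ s, Christoffel g k j s x * L x s k)
          + (S / (n : ℝ)) * (∑ s, Christoffel g s j k x * L x k s) := by
      intro k
      have c1 : ∑ s, Christoffel g k j s x * Qf g L s k x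
          = Ft x * Christoffel g k j k x - (S / (n : ℝ)) * ∑ s, Christoffel g k j s x * L x s k := by
        rw [Finset.sum_congr rfl (fun s _ => show Christoffel g k j s x * Qf g L s k x
          = Ft x * (Christoffel g k j s x * (if s = k then (1:ℝ) else 0))
            - (S / (n : ℝ)) * (Christoffel g k j s x * L x s k) from by
          rw [hQx x hx s k]; ring)]
        rw [Finset.sum_sub_distrib, ← Finset.mul_sum, ← Finset.mul_sum]
        congr 2
        rw [Finset.sum_eq_single k]
        · simp
        · intro b _ hb; simp [hb]
        · intro h; exact absurd (Finset.mem_univ k) h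
      have c2 : ∑ s, Christoffel g s j k x * Qf g L k s x
          = Ft x * Christoffel g k j k x - (S / (n : ℝ)) * ∑ s, Christoffel g s j k x * L x k s := by
        rw [Finset.sum_congr rfl (fun s _ => show Christoffel g s j k x * Qf g L k s x
          = Ft x * (Christoffel g s j k x * (if k = s then (1:ℝ) else 0))
            - (S / (n : ℝ)) * (Christoffel g s j k x * L x k s) from by
          rw [hQx x hx k s]; ring)]
        rw [Finset.sum_sub_distrib, ← Finset.mul_sum, ← Finset.mul_sum]
        congr 2
        rw [Finset.sum_eq_single k]
        · simp
        · intro b _ hb; simp [Ne.symm hb]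
        · intro h; exact absurd (Finset.mem_univ k) h
      rw [pdQval k k j, c1, c2]
      simp only [if_true]
      ring
    rw [Finset.sum_congr rfl (fun k _ => e1 k)]
    simp only [Finset.sum_add_distrib, Finset.sum_sub_distrib]
    have d1 : ∑ _k : Fin n, pd Ft j x = (n:ℝ) * pd Ft j x := by
      rw [Finset.sum_const]
      simp [Finset.card_univ, mul_comm]
    have d2 : ∑ k, (S / (n : ℝ)) * pd (fun y => L y k k) j x
        = (S / (n : ℝ)) * (2 * pd (lamL L) j x) := by
      rw [← Finset.mul_sum]
      congr 1
      have : ∑ k, pd (fun y => L y k k) j x = pd (fun y => ∑ k, L y k k) j x :=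
        (pd_sum _ _ (fun k _ => hdL k k)).symm
      rw [this, st.tr_pd hx j]
    have d3 : ∑ k, (S / (n : ℝ)) * (∑ s, Christoffel g k j s x * L x s k)
        = ∑ k, (S / (n : ℝ)) * (∑ s, Christoffel g s j k x * L x k s) := by
      rw [← Finset.mul_sum, ← Finset.mul_sum]
      congr 1
      exact Finset.sum_comm
    rw [d1, d2, d3]
    ring
  -- pd of Ft
  have hpdFt : pd Ft j x = (S / ((n:ℝ) * ((n:ℝ) - 1))) * (2 * pd (lamL L) j x) := by
    have h1 : Ft = fun y => (S / ((n:ℝ) * ((n:ℝ) - 1))) * (∑ s, L y s s)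
        - S' / ((n:ℝ) * ((n:ℝ) - 1)) := by
      funext y; rw [hFt]; ring
    rw [h1, pd_sub ((differentiableAt_const _).fun_mul (st.dAt smT hx)) (differentiableAt_const _),
      pd_cmul _ (st.dAt smT hx), pd_const, st.tr_pd hx j]
    ring
  -- right-hand side
  have hRic : ∑ s, RicciOf g s j x * Vu g L s x = (S / (n : ℝ)) * pd (lamL L) j x := by
    rw [Finset.sum_congr rfl (fun s _ => show RicciOf g s j x * Vu g L s x
      = (S / (n : ℝ)) * (g x j s * Vu g L s x) from by
      rw [hEin x hx s j, st.gsym hx s j]; ring)]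
    rw [← Finset.mul_sum, st.lam_eq hx j]
  -- combine
  have heq := st.ricci_contract hx j
  rw [hA1, hA2, hRic, hpdFt] at heq
  -- heq is now a scalar equation in pd (lamL L) j x
  set lv := pd (lamL L) j x with hlv
  have hpoly : S * lv * ((n:ℝ) * (n:ℝ) * ((n:ℝ) - 1) * ((n:ℝ) + 2)) = 0 := by
    field_simp at heq
    linear_combination (-(S * (n:ℝ) ^ 2)) * heq
  have h2 : S * ((n:ℝ) * (n:ℝ) * ((n:ℝ) - 1) * ((n:ℝ) + 2)) ≠ 0 := by
    apply mul_ne_zero hS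
    apply mul_ne_zero (mul_ne_zero (mul_ne_zero hN0 hN0) hN1)
    linarith
  have hpoly2 : S * ((n:ℝ) * (n:ℝ) * ((n:ℝ) - 1) * ((n:ℝ) + 2)) * lv = 0 := by
    linear_combination hpoly
  exact (mul_eq_zero.mp hpoly2).resolve_left h2

end Setup
end Main7
/-- if `g` is Einstein of constant non-zero scalar curvature,
`L` is geodesically compatible with `g` and non-degenerate, and `gL⁻¹` is also
Einstein of constant scalar curvature, then `d tr L ≡ 0` on `U`. -/
theorem stmt_15 {n : ℕ} (hn : 2 ≤ n) (U : Set (Fin n → ℝ)) (hUo : IsOpen U)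
    (hUc : IsConnected U) (g L : (Fin n → ℝ) → Matrix (Fin n) (Fin n) ℝ)
    (hg : IsMetricOn g U)
    (hgeo : GeodCompatOn g L U)
    (hnd : ∀ x ∈ U, (L x).det ≠ 0)
    (S : ℝ) (hS : S ≠ 0)
    (hEin : ∀ x ∈ U, ∀ i j : Fin n, RicciOf g i j x = (S / (n : ℝ)) * g x i j)
    (S' : ℝ)
    (hEin' : ∀ x ∈ U, ∀ i j : Fin n,
      RicciOf (fun y => g y * (L y)⁻¹) i j x = (S' / (n : ℝ)) * (g x * (L x)⁻¹) i j) :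
    ∀ x ∈ U, ∀ i : Fin n, pd (fun y => ∑ s, L y s s) i x = 0 := by
  intro x hx i
  have st : Setup n U g L := ⟨hUo, hg, hgeo, hnd⟩
  rw [Setup.tr_pd st hx i, Setup.lam_vanishes st hn S S' hS hEin hEin' hx i]
  ring
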